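/- arXiv:1406.1253 — 11 statements merged into one kernel-verified Lean document; each statement's English description precedes it below -/
import Mathlib

section
/- Let n, r, m, p be positive integers with σ ∈ ℂ, and let E, A ∈ ℂ^{n×n}, B ∈ ℂ^{n×m}, C ∈ ℂ^{p×n}, D ∈ ℂ^{p×m}, V, W ∈ ℂ^{n×r}. Set E_r = Wᵀ E V, A_r = Wᵀ A V, B_r = Wᵀ B, C_r = C V, D_r = D. Assume σE − A and σE_r − A_r are invertible, let b ∈ ℂ^m, and assume that (σE − A)^{-1} B b lies in the column span of V (i.e., there exists ζ ∈ ℂ^r with (σE − A)^{-1} B b = V ζ). Then the transfer functions satisfy the right tangential interpolation condition G(σ) b = G_r(σ) b, i.e., (C(σE − A)^{-1}B + D) b = (C_r(σE_r − A_r)^{-1}B_r + D_r) b. -/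
open Matrix

/-- Petrov–Galerkin projection: right tangential interpolation.
If `(σE − A)⁻¹ B b` lies in the column span of `V`, then
`G(σ) b = G_r(σ) b`. -/
theorem right_tangential_interpolation
    (n r m p : ℕ) (hn : 0 < n) (hr : 0 < r) (hm : 0 < m) (hp : 0 < p)
    (σ : ℂ)
    (E A : Matrix (Fin n) (Fin n) ℂ)
    (B : Matrix (Fin n) (Fin m) ℂ)
    (C : Matrix (Fin p) (Fin n) ℂ)
    (D : Matrix (Fin p) (Fin m) ℂ)
    (V W : Matrix (Fin n) (Fin r) ℂ)
    (hfull : IsUnit (σ • E - A))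
    (hred : IsUnit (σ • (Wᵀ * E * V) - Wᵀ * A * V))
    (b : Fin m → ℂ)
    (hspan : ∃ ζ : Fin r → ℂ,
      (σ • E - A)⁻¹.mulVec (B.mulVec b) = V.mulVec ζ) :
    (C * (σ • E - A)⁻¹ * B + D).mulVec b
      = (C * V * (σ • (Wᵀ * E * V) - Wᵀ * A * V)⁻¹ * (Wᵀ * B) + D).mulVec b := by
  obtain ⟨ζ, hζ⟩ := hspan
  set K := σ • E - A with hK
  set Kr := σ • (Wᵀ * E * V) - Wᵀ * A * V with hKr
  have hfd : IsUnit K.det := (Matrix.isUnit_iff_isUnit_det _).mp hfull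
  have hrd : IsUnit Kr.det := (Matrix.isUnit_iff_isUnit_det _).mp hred
  have hKV : Kr = Wᵀ * K * V := by
    simp [hK, hKr, Matrix.mul_sub, Matrix.sub_mul, Matrix.mul_smul,
      Matrix.smul_mul, Matrix.mul_assoc]
  have hx : K.mulVec (V.mulVec ζ) = B.mulVec b := by
    rw [← hζ, Matrix.mulVec_mulVec, Matrix.mul_nonsing_inv _ hfd, Matrix.one_mulVec]
  have hKrζ : Kr.mulVec ζ = Wᵀ.mulVec (B.mulVec b) := by
    rw [hKV, ← hx]
    simp [← Matrix.mulVec_mulVec]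
  have hζ' : Kr⁻¹.mulVec (Wᵀ.mulVec (B.mulVec b)) = ζ := by
    rw [← hKrζ, Matrix.mulVec_mulVec, Matrix.nonsing_inv_mul _ hrd, Matrix.one_mulVec]
  simp only [Matrix.add_mulVec, ← Matrix.mulVec_mulVec, hζ, hζ']
end

section
/- Let n, r, m, p be positive integers with σ ∈ ℂ, and let E, A ∈ ℂ^{n×n}, B ∈ ℂ^{n×m}, C ∈ ℂ^{p×n}, D ∈ ℂ^{p×m}, V, W ∈ ℂ^{n×r}. Set E_r = Wᵀ E V, A_r = Wᵀ A V, B_r = Wᵀ B, C_r = C V, D_r = D. Assume σE − A and σE_r − A_r are invertible, let c ∈ ℂ^p, and assume that ((σE − A)ᵀ)^{-1} Cᵀ c lies in the column span of W. Then the transfer functions satisfy the left tangential interpolation condition cᵀ G(σ) = cᵀ G_r(σ), i.e., cᵀ(C(σE − A)^{-1}B + D) = cᵀ(C_r(σE_r − A_r)^{-1}B_r + D_r). -/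
open Matrix

/-- Petrov–Galerkin projection: left tangential interpolation.
If `((σE − A)ᵀ)⁻¹ Cᵀ c` lies in the column span of `W`, then
`cᵀ G(σ) = cᵀ G_r(σ)`. -/
theorem left_tangential_interpolation
    (n r m p : ℕ) (hn : 0 < n) (hr : 0 < r) (hm : 0 < m) (hp : 0 < p)
    (σ : ℂ)
    (E A : Matrix (Fin n) (Fin n) ℂ)
    (B : Matrix (Fin n) (Fin m) ℂ)
    (C : Matrix (Fin p) (Fin n) ℂ)
    (D : Matrix (Fin p) (Fin m) ℂ)
    (V W : Matrix (Fin n) (Fin r) ℂ)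
    (hfull : IsUnit (σ • E - A))
    (hred : IsUnit (σ • (Wᵀ * E * V) - Wᵀ * A * V))
    (c : Fin p → ℂ)
    (hspan : ∃ ζ : Fin r → ℂ,
      ((σ • E - A)ᵀ)⁻¹.mulVec (Cᵀ.mulVec c) = W.mulVec ζ) :
    Matrix.vecMul c (C * (σ • E - A)⁻¹ * B + D)
      = Matrix.vecMul c (C * V * (σ • (Wᵀ * E * V) - Wᵀ * A * V)⁻¹ * (Wᵀ * B) + D) := by
  obtain ⟨ζ, hζ⟩ := hspan
  set K := σ • E - A with hKdef
  have hKr : σ • (Wᵀ * E * V) - Wᵀ * A * V = Wᵀ * K * V := by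
    simp [hKdef, Matrix.mul_sub, Matrix.sub_mul, Matrix.mul_smul, Matrix.smul_mul]
  set Kr := σ • (Wᵀ * E * V) - Wᵀ * A * V with hKrdef
  have hKinv : K⁻¹ * K = 1 := Matrix.nonsing_inv_mul K (Matrix.isUnit_iff_isUnit_det K |>.mp hfull)
  have hKrinv : Kr * Kr⁻¹ = 1 :=
    Matrix.mul_nonsing_inv Kr (Matrix.isUnit_iff_isUnit_det Kr |>.mp hred)
  -- h1 : cᵀ C K⁻¹ = ζᵀ Wᵀ
  have h1 : vecMul (vecMul c C) K⁻¹ = vecMul ζ Wᵀ := by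
    have h : (C * K⁻¹)ᵀ.mulVec c = W.mulVec ζ := by
      rw [Matrix.transpose_mul, Matrix.transpose_nonsing_inv, ← Matrix.mulVec_mulVec]
      exact hζ
    rw [Matrix.vecMul_vecMul, ← Matrix.mulVec_transpose, Matrix.vecMul_transpose]
    exact h
  have h2 : vecMul c C = vecMul (vecMul ζ Wᵀ) K := by
    have := congrArg (fun v => vecMul v K) h1
    simpa only [Matrix.vecMul_vecMul, Matrix.mul_assoc, hKinv, Matrix.mul_one,
      Matrix.vecMul_one] using this
  have key : vecMul (vecMul (vecMul (vecMul ζ Wᵀ) K) V) Kr⁻¹ = ζ := by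
    rw [Matrix.vecMul_vecMul, Matrix.vecMul_vecMul, Matrix.vecMul_vecMul, ← Matrix.mul_assoc,
      ← Matrix.mul_assoc, ← hKr, hKrinv, Matrix.vecMul_one]
  rw [Matrix.vecMul_add, Matrix.vecMul_add, ← Matrix.vecMul_vecMul, ← Matrix.vecMul_vecMul,
    ← Matrix.vecMul_vecMul, ← Matrix.vecMul_vecMul (v := c) (M := C * V),
    ← Matrix.vecMul_vecMul (M := C) (N := V), h1, h2, key, ← Matrix.vecMul_vecMul]
end

section
/- Let n, r, m, p be positive integers with σ ∈ ℂ, and let E, A ∈ ℂ^{n×n}, B ∈ ℂ^{n×m}, C ∈ ℂ^{p×n}, D ∈ ℂ^{p×m}, V, W ∈ ℂ^{n×r}. Set E_r = Wᵀ E V, A_r = Wᵀ A V, B_r = Wᵀ B, C_r = C V. Assume σE − A and σE_r − A_r are invertible, let b ∈ ℂ^m and c ∈ ℂ^p, and assume that (σE − A)^{-1} B b lies in the column span of V and ((σE − A)ᵀ)^{-1} Cᵀ c lies in the column span of W. Then the bitangential Hermite interpolation condition cᵀ G′(σ) b = cᵀ G_r′(σ) b holds; explicitly, cᵀ C (σE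 − A)^{-1} E (σE − A)^{-1} B b = cᵀ C_r (σE_r − A_r)^{-1} E_r (σE_r − A_r)^{-1} B_r b. -/
open Matrix

lemma aux_transpose_dot {n k : ℕ} (M : Matrix (Fin n) (Fin k) ℂ)
    (y : Fin n → ℂ) (x : Fin k → ℂ) :
    (Mᵀ *ᵥ y) ⬝ᵥ x = y ⬝ᵥ (M *ᵥ x) := by
  rw [Matrix.mulVec_transpose, ← Matrix.dotProduct_mulVec]

/-- Petrov–Galerkin projection: bitangential Hermite interpolation.
If `(σE − A)⁻¹ B b` lies in the column span of `V` and
`((σE − A)ᵀ)⁻¹ Cᵀ c` lies in the column span of `W`, then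
`cᵀ G′(σ) b = cᵀ G_r′(σ) b`, written explicitly as
`cᵀ C (σE − A)⁻¹ E (σE − A)⁻¹ B b = cᵀ C_r (σE_r − A_r)⁻¹ E_r (σE_r − A_r)⁻¹ B_r b`. -/
theorem bitangential_hermite_interpolation
    (n r m p : ℕ) (hn : 0 < n) (hr : 0 < r) (hm : 0 < m) (hp : 0 < p)
    (σ : ℂ)
    (E A : Matrix (Fin n) (Fin n) ℂ)
    (B : Matrix (Fin n) (Fin m) ℂ)
    (C : Matrix (Fin p) (Fin n) ℂ)
    (V W : Matrix (Fin n) (Fin r) ℂ)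
    (hfull : IsUnit (σ • E - A))
    (hred : IsUnit (σ • (Wᵀ * E * V) - Wᵀ * A * V))
    (b : Fin m → ℂ) (c : Fin p → ℂ)
    (hspanV : ∃ ζ : Fin r → ℂ,
      (σ • E - A)⁻¹.mulVec (B.mulVec b) = V.mulVec ζ)
    (hspanW : ∃ ζ : Fin r → ℂ,
      ((σ • E - A)ᵀ)⁻¹.mulVec (Cᵀ.mulVec c) = W.mulVec ζ) :
    c ⬝ᵥ (C * (σ • E - A)⁻¹ * E * (σ • E - A)⁻¹ * B).mulVec b
      = c ⬝ᵥ ((C * V) * (σ • (Wᵀ * E * V) - Wᵀ * A * V)⁻¹ * (Wᵀ * E * V)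
              * (σ • (Wᵀ * E * V) - Wᵀ * A * V)⁻¹ * (Wᵀ * B)).mulVec b := by
  obtain ⟨ζ, hζ⟩ := hspanV
  obtain ⟨η, hη⟩ := hspanW
  set K := σ • E - A with hK
  set Kr := σ • (Wᵀ * E * V) - Wᵀ * A * V with hKrdef
  have hKdet : IsUnit K.det := (Matrix.isUnit_iff_isUnit_det K).mp hfull
  have hKrdet : IsUnit Kr.det := (Matrix.isUnit_iff_isUnit_det Kr).mp hred
  have hKtdet : IsUnit Kᵀ.det := by rw [Matrix.det_transpose]; exact hKdet
  have hKrEq : Kr = Wᵀ * K * V := by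
    rw [hKrdef, hK]
    rw [Matrix.mul_sub, Matrix.sub_mul, Matrix.mul_smul, Matrix.smul_mul]
  have hKK : K * K⁻¹ = 1 := Matrix.mul_nonsing_inv K hKdet
  have hKrKr : Kr * Kr⁻¹ = 1 := Matrix.mul_nonsing_inv Kr hKrdet
  have hKrKr' : Kr⁻¹ * Kr = 1 := Matrix.nonsing_inv_mul Kr hKrdet
  -- key vector identities
  have hBb : B *ᵥ b = K *ᵥ (V *ᵥ ζ) := by
    rw [← hζ, Matrix.mulVec_mulVec, hKK, Matrix.one_mulVec]
  have hCc : Cᵀ *ᵥ c = Kᵀ *ᵥ (W *ᵥ η) := by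
    rw [← hη, Matrix.mulVec_mulVec, Matrix.mul_nonsing_inv _ hKtdet, Matrix.one_mulVec]
  -- LHS
  have hL : c ⬝ᵥ (C * K⁻¹ * E * K⁻¹ * B) *ᵥ b
      = (W *ᵥ η) ⬝ᵥ (E *ᵥ (V *ᵥ ζ)) := by
    have h1 : (C * K⁻¹ * E * K⁻¹ * B) *ᵥ b
        = C *ᵥ (K⁻¹ *ᵥ (E *ᵥ (K⁻¹ *ᵥ (B *ᵥ b)))) := by
      simp [Matrix.mulVec_mulVec, Matrix.mul_assoc]
    rw [h1, hζ]
    rw [Matrix.dotProduct_mulVec, ← Matrix.mulVec_transpose, hCc,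
      aux_transpose_dot, Matrix.mulVec_mulVec, hKK, Matrix.one_mulVec]
  -- RHS
  have hR : c ⬝ᵥ ((C * V) * Kr⁻¹ * (Wᵀ * E * V) * Kr⁻¹ * (Wᵀ * B)) *ᵥ b
      = (W *ᵥ η) ⬝ᵥ (E *ᵥ (V *ᵥ ζ)) := by
    have h1 : ((C * V) * Kr⁻¹ * (Wᵀ * E * V) * Kr⁻¹ * (Wᵀ * B)) *ᵥ b
        = (C * V) *ᵥ (Kr⁻¹ *ᵥ ((Wᵀ * E * V) *ᵥ (Kr⁻¹ *ᵥ ((Wᵀ * B) *ᵥ b)))) := by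
      simp [Matrix.mulVec_mulVec, Matrix.mul_assoc]
    have h2 : (Wᵀ * B) *ᵥ b = Kr *ᵥ ζ := by
      rw [← Matrix.mulVec_mulVec, hBb, hKrEq]
      simp [Matrix.mulVec_mulVec, Matrix.mul_assoc]
    have h3 : Kr⁻¹ *ᵥ ((Wᵀ * B) *ᵥ b) = ζ := by
      rw [h2, Matrix.mulVec_mulVec, hKrKr', Matrix.one_mulVec]
    have h4 : (C * V)ᵀ *ᵥ c = Krᵀ *ᵥ η := by
      rw [Matrix.transpose_mul, ← Matrix.mulVec_mulVec, hCc, hKrEq]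
      simp [Matrix.mulVec_mulVec, Matrix.mul_assoc, Matrix.transpose_mul]
    rw [h1, h3]
    rw [Matrix.dotProduct_mulVec, ← Matrix.mulVec_transpose, h4,
      aux_transpose_dot, Matrix.mulVec_mulVec, hKrKr, Matrix.one_mulVec]
    rw [← Matrix.mulVec_mulVec, ← Matrix.mulVec_mulVec,
      dotProduct_comm, aux_transpose_dot, dotProduct_comm]
  rw [hL, hR]
end

section
/- Let E, A ∈ ℂ^{n×n}, B ∈ ℂ^{n×m}, C ∈ ℂ^{p×n}, D ∈ ℂ^{p×m}, and let P_l, P_r ∈ ℂ^{n×n} satisfy P_l² = P_l, P_r² = P_r, E P_r = P_l E, and A P_r = P_l A. Let V_f, W_f ∈ ℂ^{n×k} and V_∞, W_∞ ∈ ℂ^{n×k_∞}, and set V = [V_f, V_∞] ∈ ℂ^{n×(k+k_∞)} and W = [W_f, W_∞]. Assume the column span of V_∞ contains the range of I − P_r. Let σ ∈ ℂ and b ∈ ℂ^m be such that σE − A is invertible, (σE − A)^{-1} P_l B b lies in the column span of V_f, and the reduced matrix σ Wᵀ E V − Wᵀ A V is invertible. Then, with E_r = Wᵀ E V, A_r =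 Wᵀ A V, B_r = Wᵀ B, C_r = C V, and D_r = D, the right tangential interpolation condition G(σ) b = G_r(σ) b holds, where G(s) = C(sE − A)^{-1}B + D and G_r(s) = C_r(sE_r − A_r)^{-1}B_r + D_r. -/
open Matrix

/-! The resolvent `F⁻¹ = (σE − A)⁻¹` intertwines the spectral projectors, `F⁻¹ P_l = P_r F⁻¹`,
so `u = F⁻¹ B b` splits as `P_r u = F⁻¹ P_l B b ∈ span V_f` plus `(I − P_r) u ∈ span V_∞`;
hence `u = V z`.
Any Petrov–Galerkin projection whose trial space contains the full-order solution `u` reproduces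
it: `Wᵀ F V z = Wᵀ B b` forces `z = (Wᵀ F V)⁻¹ Wᵀ B b`, and then both transfer functions equal
`C u + D b`. -/

namespace Matrix

variable {ι κ R : Type*} [Fintype ι] [CommRing R]

theorem smul_sub_mul_eq_mul_smul_sub {E A P Q : Matrix ι ι R} (σ : R)
    (hE : E * P = Q * E) (hA : A * P = Q * A) :
    (σ • E - A) * P = Q * (σ • E - A) := by
  rw [Matrix.sub_mul, Matrix.mul_sub, Matrix.smul_mul, Matrix.mul_smul, hE, hA]

theorem inv_mul_eq_mul_inv_of_mul_eq [DecidableEq ι] {F P Q : Matrix ι ι R} [Invertible F]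
    (h : F * P = Q * F) : F⁻¹ * Q = P * F⁻¹ := by
  rw [inv_mul_eq_iff_eq_mul_of_invertible, ← Matrix.mul_assoc, h,
    mul_inv_cancel_right_of_invertible]

theorem mul_smul_sub_mul {ρ : Type*} [Fintype κ] (W : Matrix ρ ι R) (E A : Matrix ι ι R)
    (V : Matrix ι κ R) (σ : R) :
    W * (σ • E - A) * V = σ • (W * E * V) - W * A * V := by
  rw [Matrix.mul_sub, Matrix.sub_mul, Matrix.mul_smul, Matrix.smul_mul]

theorem inv_mulVec_eq_fromCols_mulVec [DecidableEq ι] {κ' : Type*} [Fintype κ] [Fintype κ']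
    {F P Q : Matrix ι ι R} [Invertible F] (hFPQ : F * P = Q * F)
    {V₁ : Matrix ι κ R} {V₂ : Matrix ι κ' R} {v : ι → R} {ζ : κ → R} {y : κ' → R}
    (h₁ : F⁻¹ *ᵥ (Q *ᵥ v) = V₁ *ᵥ ζ) (h₂ : (1 - P) *ᵥ (F⁻¹ *ᵥ v) = V₂ *ᵥ y) :
    F⁻¹ *ᵥ v = fromCols V₁ V₂ *ᵥ Sum.elim ζ y := by
  have hP : P *ᵥ (F⁻¹ *ᵥ v) = V₁ *ᵥ ζ := by
    rw [← h₁, mulVec_mulVec, mulVec_mulVec, inv_mul_eq_mul_inv_of_mul_eq hFPQ]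
  rw [fromCols_mulVec_sumElim, ← hP, ← h₂, ← add_mulVec, add_sub_cancel, one_mulVec]

theorem mul_inv_mul_add_mulVec_eq_of_inv_mulVec_eq [DecidableEq ι] {μ π : Type*} [Fintype κ]
    [DecidableEq κ] [Fintype μ] (F : Matrix ι ι R) [Invertible F] (B : Matrix ι μ R)
    (C : Matrix π ι R) (D : Matrix π μ R) (W : Matrix κ ι R) (V : Matrix ι κ R)
    [Invertible (W * F * V)] {b : μ → R} {z : κ → R} (hz : F⁻¹ *ᵥ (B *ᵥ b) = V *ᵥ z) :
    (C * F⁻¹ * B + D) *ᵥ b = (C * V * (W * F * V)⁻¹ * (W * B) + D) *ᵥ b := by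
  have hred : (W * F * V)⁻¹ *ᵥ ((W * B) *ᵥ b) = z := by
    refine inv_mulVec_eq_vec ?_
    rw [← mulVec_mulVec z (W * F), ← hz, mulVec_mulVec, mul_inv_cancel_right_of_invertible,
      mulVec_mulVec]
  calc (C * F⁻¹ * B + D) *ᵥ b = C *ᵥ (F⁻¹ *ᵥ (B *ᵥ b)) + D *ᵥ b := by
        simp only [add_mulVec, mulVec_mulVec, Matrix.mul_assoc]
    _ = C *ᵥ (V *ᵥ ((W * F * V)⁻¹ *ᵥ ((W * B) *ᵥ b))) + D *ᵥ b := by rw [hz, hred]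
    _ = (C * V * (W * F * V)⁻¹ * (W * B) + D) *ᵥ b := by
        simp only [add_mulVec, mulVec_mulVec, Matrix.mul_assoc]

end Matrix

theorem dae_right_tangential_interpolation_general
    (n m p k kinf : ℕ)
    (E A : Matrix (Fin n) (Fin n) ℂ)
    (B : Matrix (Fin n) (Fin m) ℂ)
    (C : Matrix (Fin p) (Fin n) ℂ)
    (D : Matrix (Fin p) (Fin m) ℂ)
    (Pl Pr : Matrix (Fin n) (Fin n) ℂ)
    (hEP : E * Pr = Pl * E) (hAP : A * Pr = Pl * A)
    (Vf : Matrix (Fin n) (Fin k) ℂ)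
    (Vinf : Matrix (Fin n) (Fin kinf) ℂ)
    (V W : Matrix (Fin n) (Fin k ⊕ Fin kinf) ℂ)
    (hV : V = fromCols Vf Vinf)
    (hVinf : ∀ x : Fin n → ℂ, ∃ y : Fin kinf → ℂ,
      (1 - Pr).mulVec x = Vinf.mulVec y)
    (σ : ℂ) (b : Fin m → ℂ)
    (hfull : IsUnit (σ • E - A))
    (hspan : ∃ ζ : Fin k → ℂ,
      (σ • E - A)⁻¹.mulVec (Pl.mulVec (B.mulVec b)) = Vf.mulVec ζ)
    (hred : IsUnit (σ • (Wᵀ * E * V) - Wᵀ * A * V)) :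
    (C * (σ • E - A)⁻¹ * B + D).mulVec b
      = (C * V * (σ • (Wᵀ * E * V) - Wᵀ * A * V)⁻¹ * (Wᵀ * B) + D).mulVec b := by
  let _ := hfull.invertible
  rw [← mul_smul_sub_mul] at hred ⊢
  let _ := hred.invertible
  obtain ⟨ζ, hζ⟩ := hspan
  obtain ⟨y, hy⟩ := hVinf ((σ • E - A)⁻¹ *ᵥ (B *ᵥ b))
  have hu := inv_mulVec_eq_fromCols_mulVec (smul_sub_mul_eq_mul_smul_sub σ hEP hAP) hζ hy
  rw [← hV] at hu
  exact mul_inv_mul_add_mulVec_eq_of_inv_mulVec_eq (σ • E - A) B C D Wᵀ V hu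

/-- Interpolatory model reduction of DAEs (Theorem 3.1 of Gugercin–Stykel–Wyatt,
right tangential condition).  With `V = [V_f, V_∞]`, `W = [W_f, W_∞]`, where the
column span of `V_∞` contains the range of `I − P_r` and
`(σE − A)⁻¹ P_l B b` lies in the column span of `V_f`, the Petrov–Galerkin
reduced model satisfies `G(σ) b = G_r(σ) b`. -/
theorem dae_right_tangential_interpolation
    (n m p k kinf : ℕ)
    (E A : Matrix (Fin n) (Fin n) ℂ)
    (B : Matrix (Fin n) (Fin m) ℂ)
    (C : Matrix (Fin p) (Fin n) ℂ)
    (D : Matrix (Fin p) (Fin m) ℂ)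
    (Pl Pr : Matrix (Fin n) (Fin n) ℂ)
    (hPl : Pl * Pl = Pl) (hPr : Pr * Pr = Pr)
    (hEP : E * Pr = Pl * E) (hAP : A * Pr = Pl * A)
    (Vf Wf : Matrix (Fin n) (Fin k) ℂ)
    (Vinf Winf : Matrix (Fin n) (Fin kinf) ℂ)
    (V W : Matrix (Fin n) (Fin k ⊕ Fin kinf) ℂ)
    (hV : V = fromCols Vf Vinf)
    (hW : W = fromCols Wf Winf)
    (hVinf : ∀ x : Fin n → ℂ, ∃ y : Fin kinf → ℂ,
      (1 - Pr).mulVec x = Vinf.mulVec y)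
    (σ : ℂ) (b : Fin m → ℂ)
    (hfull : IsUnit (σ • E - A))
    (hspan : ∃ ζ : Fin k → ℂ,
      (σ • E - A)⁻¹.mulVec (Pl.mulVec (B.mulVec b)) = Vf.mulVec ζ)
    (hred : IsUnit (σ • (Wᵀ * E * V) - Wᵀ * A * V)) :
    (C * (σ • E - A)⁻¹ * B + D).mulVec b
      = (C * V * (σ • (Wᵀ * E * V) - Wᵀ * A * V)⁻¹ * (Wᵀ * B) + D).mulVec b :=
  dae_right_tangential_interpolation_general n m p k kinf E A B C D Pl Pr hEP hAP Vf Vinf V W hV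
    hVinf σ b hfull hspan hred
end

section
/- Let E, A ∈ ℂ^{n×n}, B ∈ ℂ^{n×m}, C ∈ ℂ^{p×n}, D ∈ ℂ^{p×m}, and let P_l, P_r ∈ ℂ^{n×n} satisfy P_l² = P_l, P_r² = P_r, E P_r = P_l E, and A P_r = P_l A. Let V_f, W_f ∈ ℂ^{n×k} and V_∞, W_∞ ∈ ℂ^{n×k_∞}, and set V = [V_f, V_∞] and W = [W_f, W_∞]. Assume the column span of W_∞ contains the range of (I − P_l)ᵀ. Let σ ∈ ℂ and c ∈ ℂ^p be such that σE − A is invertible, ((σE − A)ᵀ)^{-1} P_rᵀ Cᵀ c lies in the column span of W_f, and σ Wᵀ E V − Wᵀ A V is invertible. Then, with E_r = Wᵀ E V, A_r = Wᵀ A V, B_r = Wᵀ B, C_r = C V, and D_r = D, the left tangential interpolation condition cᵀ G(σ) = cᵀ G_r(σ) holds, where G(s) = C(sE − A)^{-1}B + D and G_r(s) = C_r(sE_r − A_r)^{-1}B_r + D_r. -/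
open Matrix

/-!
Write `K = σE − A` and `g = K⁻ᵀ Cᵀ c`, so that `cᵀ C K⁻¹ = gᵀ`. Since `K` intertwines the
spectral projectors (`K P_r = P_l K`), splitting `Cᵀ c = P_rᵀ Cᵀ c + (I − P_r)ᵀ Cᵀ c` gives
`g = K⁻ᵀ P_rᵀ Cᵀ c + (I − P_l)ᵀ g`, a vector of the form `W z`. The matrix
`K V (Wᵀ K V)⁻¹ Wᵀ` is an oblique projector fixing every row vector `zᵀ Wᵀ`, hence
`cᵀ C V (Wᵀ K V)⁻¹ Wᵀ B = gᵀ K V (Wᵀ K V)⁻¹ Wᵀ B = gᵀ B = cᵀ C K⁻¹ B`.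
-/

namespace Matrix

variable {R : Type*} [CommRing R] {n r m : Type*} [Fintype n] [DecidableEq n]

theorem mul_nonsing_inv_eq_nonsing_inv_mul_of_mul_eq {K P Q : Matrix n n R} (hK : IsUnit K)
    (h : K * P = Q * K) : P * K⁻¹ = K⁻¹ * Q := by
  have hKdet : IsUnit K.det := (isUnit_iff_isUnit_det K).mp hK
  calc P * K⁻¹ = K⁻¹ * (K * P) * K⁻¹ := by rw [← Matrix.mul_assoc, nonsing_inv_mul K hKdet,
        Matrix.one_mul]
    _ = K⁻¹ * Q := by rw [h, ← Matrix.mul_assoc, Matrix.mul_assoc, mul_nonsing_inv K hKdet,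
        Matrix.mul_one]

theorem exists_transpose_inv_mulVec_eq_fromCols_mulVec {k l : Type*} [Fintype k] [Fintype l]
    {K P Q : Matrix n n R} (hK : IsUnit K) (hKP : K * P = Q * K)
    {Wf : Matrix n k R} {Winf : Matrix n l R} {w : n → R}
    (hfin : ∃ ζ, Kᵀ⁻¹ *ᵥ (Pᵀ *ᵥ w) = Wf *ᵥ ζ)
    (hinf : ∀ x, ∃ y, (1 - Q)ᵀ *ᵥ x = Winf *ᵥ y) :
    ∃ z, Kᵀ⁻¹ *ᵥ w = fromCols Wf Winf *ᵥ z := by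
  obtain ⟨ζ, hζ⟩ := hfin
  obtain ⟨y, hy⟩ := hinf (Kᵀ⁻¹ *ᵥ w)
  have hcomm : Kᵀ⁻¹ * (1 - P)ᵀ = (1 - Q)ᵀ * Kᵀ⁻¹ := by
    have h := congrArg transpose <| mul_nonsing_inv_eq_nonsing_inv_mul_of_mul_eq hK
      (show K * (1 - P) = (1 - Q) * K by rw [Matrix.mul_sub, Matrix.sub_mul, hKP,
        Matrix.mul_one, Matrix.one_mul])
    simpa only [transpose_mul, transpose_nonsing_inv] using h
  have hsplit : w = Pᵀ *ᵥ w + (1 - P)ᵀ *ᵥ w := by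
    rw [← add_mulVec, ← transpose_add, add_sub_cancel, transpose_one, one_mulVec]
  refine ⟨Sum.elim ζ y, ?_⟩
  conv_lhs => rw [hsplit]
  rw [mulVec_add, hζ, mulVec_mulVec, hcomm, ← mulVec_mulVec, hy, fromCols_mulVec_sumElim]

theorem vecMul_nonsing_inv_mul_eq_of_transpose_inv_mulVec_eq [Fintype r] [DecidableEq r]
    {K : Matrix n n R} (hK : IsUnit K) {V W : Matrix n r R} (hKr : IsUnit (Wᵀ * K * V))
    {w : n → R} {z : r → R} (h : Kᵀ⁻¹ *ᵥ w = W *ᵥ z) (B : Matrix n m R) :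
    w ᵥ* (K⁻¹ * B) = w ᵥ* (V * (Wᵀ * K * V)⁻¹ * (Wᵀ * B)) := by
  have hg : w ᵥ* K⁻¹ = z ᵥ* Wᵀ := by
    rwa [← transpose_nonsing_inv, mulVec_transpose, ← vecMul_transpose] at h
  have hw : w = (z ᵥ* Wᵀ) ᵥ* K := by
    rw [← hg, vecMul_vecMul, nonsing_inv_mul K ((isUnit_iff_isUnit_det K).mp hK), vecMul_one]
  have hproj : Wᵀ * K * (V * (Wᵀ * K * V)⁻¹ * (Wᵀ * B)) = Wᵀ * B := by
    simp only [← Matrix.mul_assoc]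
    rw [mul_nonsing_inv _ ((isUnit_iff_isUnit_det _).mp hKr), Matrix.one_mul]
  calc w ᵥ* (K⁻¹ * B) = z ᵥ* (Wᵀ * B) := by rw [← vecMul_vecMul, hg, vecMul_vecMul]
    _ = w ᵥ* (V * (Wᵀ * K * V)⁻¹ * (Wᵀ * B)) := by
      rw [hw, vecMul_vecMul, vecMul_vecMul, ← Matrix.mul_assoc, hproj]

end Matrix

theorem dae_left_tangential_interpolation_general
    (n m p k kinf : ℕ)
    (E A : Matrix (Fin n) (Fin n) ℂ)
    (B : Matrix (Fin n) (Fin m) ℂ)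
    (C : Matrix (Fin p) (Fin n) ℂ)
    (D : Matrix (Fin p) (Fin m) ℂ)
    (Pl Pr : Matrix (Fin n) (Fin n) ℂ)
    (hEP : E * Pr = Pl * E) (hAP : A * Pr = Pl * A)
    (Wf : Matrix (Fin n) (Fin k) ℂ)
    (Winf : Matrix (Fin n) (Fin kinf) ℂ)
    (V W : Matrix (Fin n) (Fin k ⊕ Fin kinf) ℂ)
    (hW : W = fromCols Wf Winf)
    (hWinf : ∀ x : Fin n → ℂ, ∃ y : Fin kinf → ℂ,
      ((1 - Pl)ᵀ).mulVec x = Winf.mulVec y)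
    (σ : ℂ) (c : Fin p → ℂ)
    (hfull : IsUnit (σ • E - A))
    (hspan : ∃ ζ : Fin k → ℂ,
      ((σ • E - A)ᵀ)⁻¹.mulVec (Prᵀ.mulVec (Cᵀ.mulVec c)) = Wf.mulVec ζ)
    (hred : IsUnit (σ • (Wᵀ * E * V) - Wᵀ * A * V)) :
    Matrix.vecMul c (C * (σ • E - A)⁻¹ * B + D)
      = Matrix.vecMul c (C * V * (σ • (Wᵀ * E * V) - Wᵀ * A * V)⁻¹ * (Wᵀ * B) + D) := by
  set K := σ • E - A
  have hKP : K * Pr = Pl * K := by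
    rw [Matrix.sub_mul, Matrix.mul_sub, Matrix.smul_mul, Matrix.mul_smul, hEP, hAP]
  have hKr : σ • (Wᵀ * E * V) - Wᵀ * A * V = Wᵀ * K * V := by
    rw [Matrix.mul_sub, Matrix.sub_mul, Matrix.mul_smul, Matrix.smul_mul]
  obtain ⟨z, hz⟩ := exists_transpose_inv_mulVec_eq_fromCols_mulVec hfull hKP hspan hWinf
  rw [← hW, mulVec_transpose] at hz
  rw [hKr] at hred ⊢
  rw [vecMul_add, vecMul_add]
  congr 1
  calc c ᵥ* (C * K⁻¹ * B) = (c ᵥ* C) ᵥ* (K⁻¹ * B) := by rw [Matrix.mul_assoc, vecMul_vecMul]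
    _ = (c ᵥ* C) ᵥ* (V * (Wᵀ * K * V)⁻¹ * (Wᵀ * B)) :=
      vecMul_nonsing_inv_mul_eq_of_transpose_inv_mulVec_eq hfull hred hz B
    _ = c ᵥ* (C * V * (Wᵀ * K * V)⁻¹ * (Wᵀ * B)) := by
      rw [vecMul_vecMul]; simp only [Matrix.mul_assoc]

/-- Interpolatory model reduction of DAEs (Theorem 3.1 of Gugercin–Stykel–Wyatt,
left tangential condition).  With `V = [V_f, V_∞]`, `W = [W_f, W_∞]`, where the
column span of `W_∞` contains the range of `(I − P_l)ᵀ` and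
`((σE − A)ᵀ)⁻¹ P_rᵀ Cᵀ c` lies in the column span of `W_f`, the Petrov–Galerkin
reduced model satisfies `cᵀ G(σ) = cᵀ G_r(σ)`. -/
theorem dae_left_tangential_interpolation
    (n m p k kinf : ℕ)
    (E A : Matrix (Fin n) (Fin n) ℂ)
    (B : Matrix (Fin n) (Fin m) ℂ)
    (C : Matrix (Fin p) (Fin n) ℂ)
    (D : Matrix (Fin p) (Fin m) ℂ)
    (Pl Pr : Matrix (Fin n) (Fin n) ℂ)
    (hPl : Pl * Pl = Pl) (hPr : Pr * Pr = Pr)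
    (hEP : E * Pr = Pl * E) (hAP : A * Pr = Pl * A)
    (Vf Wf : Matrix (Fin n) (Fin k) ℂ)
    (Vinf Winf : Matrix (Fin n) (Fin kinf) ℂ)
    (V W : Matrix (Fin n) (Fin k ⊕ Fin kinf) ℂ)
    (hV : V = fromCols Vf Vinf)
    (hW : W = fromCols Wf Winf)
    (hWinf : ∀ x : Fin n → ℂ, ∃ y : Fin kinf → ℂ,
      ((1 - Pl)ᵀ).mulVec x = Winf.mulVec y)
    (σ : ℂ) (c : Fin p → ℂ)
    (hfull : IsUnit (σ • E - A))
    (hspan : ∃ ζ : Fin k → ℂ,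
      ((σ • E - A)ᵀ)⁻¹.mulVec (Prᵀ.mulVec (Cᵀ.mulVec c)) = Wf.mulVec ζ)
    (hred : IsUnit (σ • (Wᵀ * E * V) - Wᵀ * A * V)) :
    Matrix.vecMul c (C * (σ • E - A)⁻¹ * B + D)
      = Matrix.vecMul c (C * V * (σ • (Wᵀ * E * V) - Wᵀ * A * V)⁻¹ * (Wᵀ * B) + D) :=
  dae_left_tangential_interpolation_general n m p k kinf E A B C D Pl Pr hEP hAP Wf Winf V W hW
    hWinf σ c hfull hspan hred
end

section
/- Let E, A ∈ ℂ^{n×n}, B ∈ ℂ^{n×m}, C ∈ ℂ^{p×n}, D ∈ ℂ^{p×m}, and let P_l, P_r ∈ ℂ^{n×n} satisfy P_l² = P_l, P_r² = P_r, E P_r = P_l E, and A P_r = P_l A. Let V_f, W_f ∈ ℂ^{n×k} and V_∞, W_∞ ∈ ℂ^{n×k_∞}, and set V = [V_f, V_∞] and W = [W_f, W_∞]. Assume the column span of V_∞ contains the range of I − P_r and the column span of W_∞ contains the range of (I − P_l)ᵀ. Let σ ∈ ℂ, b ∈ ℂ^m, c ∈ ℂ^p be such that σE − A is invertible, (σE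 − A)^{-1} P_l B b lies in the column span of V_f, ((σE − A)ᵀ)^{-1} P_rᵀ Cᵀ c lies in the column span of W_f, and σ Wᵀ E V − Wᵀ A V is invertible. Then, with E_r = Wᵀ E V, A_r = Wᵀ A V, B_r = Wᵀ B, C_r = C V, the bitangential Hermite condition cᵀ G′(σ) b = cᵀ G_r′(σ) b holds; explicitly, cᵀ C (σE − A)^{-1} E (σE − A)^{-1} B b = cᵀ C_r (σE_r − A_r)^{-1} E_r (σE_r − A_r)^{-1} B_r b. -/
open Matrix

/-!
Write `K = σE − A`, so that `σE_r − A_r = Wᵀ K V`. Since `K P_r = P_l K`, also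
`K⁻¹ P_l = P_r K⁻¹`; splitting `v = K⁻¹ B b` as `P_r v + (I − P_r) v` then puts the first
part in the span of `V_f` and the second in that of `V_∞`, so `v = V z`, and dually
`u = K⁻ᵀ Cᵀ c = W y`. The Petrov–Galerkin reduced pencil reproduces these solutions,
`(Wᵀ K V)⁻¹ Wᵀ B b = z` and `(Wᵀ K V)⁻ᵀ Vᵀ Cᵀ c = y`, so both sides of the Hermite
condition equal `u ⬝ E v`.
-/

namespace Matrix

variable {R : Type*} [CommRing R] {ι κ β γ : Type*}
  [Fintype ι] [Fintype κ] [Fintype β] [Fintype γ]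

theorem nonsing_inv_mul_eq_mul_nonsing_inv_of_mul_eq [DecidableEq ι] {K P Q : Matrix ι ι R}
    (hK : IsUnit K.det) (h : K * P = Q * K) : K⁻¹ * Q = P * K⁻¹ :=
  calc K⁻¹ * Q = K⁻¹ * (Q * K) * K⁻¹ := by
        rw [Matrix.mul_assoc, Matrix.mul_assoc, mul_nonsing_inv _ hK, Matrix.mul_one]
    _ = P * K⁻¹ := by
        rw [← h, ← Matrix.mul_assoc, nonsing_inv_mul _ hK, Matrix.one_mul]

theorem eq_fromCols_mulVec_sumElim_of_one_sub [DecidableEq ι] {α : Type*} [Fintype α]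
    (P : Matrix ι ι R) (V₁ : Matrix ι κ R) (V₂ : Matrix ι α R) {x : ι → R}
    {ζ : κ → R} {η : α → R} (h₁ : P *ᵥ x = V₁ *ᵥ ζ) (h₂ : (1 - P) *ᵥ x = V₂ *ᵥ η) :
    x = fromCols V₁ V₂ *ᵥ Sum.elim ζ η := by
  rw [fromCols_mulVec_sumElim, ← h₁, ← h₂, sub_mulVec, one_mulVec, add_sub_cancel]

theorem petrovGalerkin_inv_mulVec [DecidableEq κ] (K : Matrix ι ι R) (V W : Matrix ι κ R)
    (hKr : IsUnit (Wᵀ * K * V).det) (z : κ → R) :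
    (Wᵀ * K * V)⁻¹ *ᵥ (Wᵀ *ᵥ (K *ᵥ (V *ᵥ z))) = z := by
  simp only [mulVec_mulVec, ← Matrix.mul_assoc, nonsing_inv_mul _ hKr, one_mulVec]

theorem dotProduct_mul_mul_mulVec {α δ : Type*} [Fintype α] [Fintype δ]
    (c : γ → R) (X : Matrix γ α R) (M : Matrix α δ R) (Y : Matrix δ β R) (b : β → R) :
    c ⬝ᵥ (X * M * Y) *ᵥ b = (Xᵀ *ᵥ c) ⬝ᵥ M *ᵥ (Y *ᵥ b) := by
  rw [← mulVec_mulVec, ← mulVec_mulVec, dotProduct_mulVec, mulVec_transpose]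

theorem exists_inv_mulVec_eq_fromCols_mulVec [DecidableEq ι] {α : Type*} [Fintype α]
    {K Pl Pr : Matrix ι ι R} (hK : IsUnit K.det) (hKP : K * Pr = Pl * K)
    {Vf : Matrix ι κ R} {Vinf : Matrix ι α R}
    (hVinf : ∀ x, ∃ η, (1 - Pr) *ᵥ x = Vinf *ᵥ η) {x : ι → R}
    (hspan : ∃ ζ, K⁻¹ *ᵥ (Pl *ᵥ x) = Vf *ᵥ ζ) :
    ∃ z, K⁻¹ *ᵥ x = fromCols Vf Vinf *ᵥ z := by
  obtain ⟨ζ, hζ⟩ := hspan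
  obtain ⟨η, hη⟩ := hVinf (K⁻¹ *ᵥ x)
  refine ⟨Sum.elim ζ η, eq_fromCols_mulVec_sumElim_of_one_sub Pr Vf Vinf ?_ hη⟩
  rw [mulVec_mulVec, ← nonsing_inv_mul_eq_mul_nonsing_inv_of_mul_eq hK hKP, ← mulVec_mulVec, hζ]

theorem bitangential_hermite_of_eq_mulVec [DecidableEq ι] [DecidableEq κ]
    (K M : Matrix ι ι R) (V W : Matrix ι κ R) (B : Matrix ι β R) (C : Matrix γ ι R)
    {b : β → R} {c : γ → R} {z y : κ → R} (hK : IsUnit K.det) (hKr : IsUnit (Wᵀ * K * V).det)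
    (hz : K⁻¹ *ᵥ (B *ᵥ b) = V *ᵥ z) (hy : Kᵀ⁻¹ *ᵥ (Cᵀ *ᵥ c) = W *ᵥ y) :
    c ⬝ᵥ (C * K⁻¹ * M * K⁻¹ * B) *ᵥ b
      = c ⬝ᵥ (C * V * (Wᵀ * K * V)⁻¹ * (Wᵀ * M * V) * (Wᵀ * K * V)⁻¹ * (Wᵀ * B)) *ᵥ b := by
  have hBb : B *ᵥ b = K *ᵥ (V *ᵥ z) := by
    rw [← hz, mulVec_mulVec, mul_nonsing_inv _ hK, one_mulVec]
  have hCc : Cᵀ *ᵥ c = Kᵀ *ᵥ (W *ᵥ y) := by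
    rw [← hy, mulVec_mulVec, mul_nonsing_inv _ (isUnit_det_transpose K hK), one_mulVec]
  have hKrT : (Wᵀ * K * V)ᵀ = Vᵀ * Kᵀ * W := by
    rw [transpose_mul, transpose_mul, transpose_transpose, Matrix.mul_assoc]
  have hz_r : ((Wᵀ * K * V)⁻¹ * (Wᵀ * B)) *ᵥ b = z := by
    rw [← mulVec_mulVec, ← mulVec_mulVec, hBb, petrovGalerkin_inv_mulVec K V W hKr]
  have hy_r : (C * V * (Wᵀ * K * V)⁻¹)ᵀ *ᵥ c = y := by
    have hKrT_det : IsUnit (Vᵀ * Kᵀ * W).det := hKrT ▸ isUnit_det_transpose _ hKr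
    rw [transpose_mul, transpose_nonsing_inv, hKrT, transpose_mul, ← mulVec_mulVec,
      ← mulVec_mulVec, hCc, petrovGalerkin_inv_mulVec Kᵀ W V hKrT_det]
  rw [Matrix.mul_assoc (C * K⁻¹ * M), dotProduct_mul_mul_mulVec, transpose_mul,
    ← mulVec_mulVec, ← mulVec_mulVec, transpose_nonsing_inv, hy, hz,
    Matrix.mul_assoc (C * V * (Wᵀ * K * V)⁻¹ * (Wᵀ * M * V)), dotProduct_mul_mul_mulVec, hy_r,
    hz_r, dotProduct_mul_mul_mulVec, transpose_transpose]

end Matrix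

theorem dae_bitangential_hermite_interpolation_general
    (n m p k kinf : ℕ)
    (E A : Matrix (Fin n) (Fin n) ℂ)
    (B : Matrix (Fin n) (Fin m) ℂ)
    (C : Matrix (Fin p) (Fin n) ℂ)
    (Pl Pr : Matrix (Fin n) (Fin n) ℂ)
    (hEP : E * Pr = Pl * E) (hAP : A * Pr = Pl * A)
    (Vf Wf : Matrix (Fin n) (Fin k) ℂ)
    (Vinf Winf : Matrix (Fin n) (Fin kinf) ℂ)
    (V W : Matrix (Fin n) (Fin k ⊕ Fin kinf) ℂ)
    (hV : V = fromCols Vf Vinf)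
    (hW : W = fromCols Wf Winf)
    (hVinf : ∀ x : Fin n → ℂ, ∃ y : Fin kinf → ℂ,
      (1 - Pr).mulVec x = Vinf.mulVec y)
    (hWinf : ∀ x : Fin n → ℂ, ∃ y : Fin kinf → ℂ,
      ((1 - Pl)ᵀ).mulVec x = Winf.mulVec y)
    (σ : ℂ) (b : Fin m → ℂ) (c : Fin p → ℂ)
    (hfull : IsUnit (σ • E - A))
    (hspanV : ∃ ζ : Fin k → ℂ,
      (σ • E - A)⁻¹.mulVec (Pl.mulVec (B.mulVec b)) = Vf.mulVec ζ)
    (hspanW : ∃ ζ : Fin k → ℂ,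
      ((σ • E - A)ᵀ)⁻¹.mulVec (Prᵀ.mulVec (Cᵀ.mulVec c)) = Wf.mulVec ζ)
    (hred : IsUnit (σ • (Wᵀ * E * V) - Wᵀ * A * V)) :
    c ⬝ᵥ (C * (σ • E - A)⁻¹ * E * (σ • E - A)⁻¹ * B).mulVec b
      = c ⬝ᵥ ((C * V) * (σ • (Wᵀ * E * V) - Wᵀ * A * V)⁻¹ * (Wᵀ * E * V)
              * (σ • (Wᵀ * E * V) - Wᵀ * A * V)⁻¹ * (Wᵀ * B)).mulVec b := by
  have hK : IsUnit (σ • E - A).det := (isUnit_iff_isUnit_det _).mp hfull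
  have hKP : (σ • E - A) * Pr = Pl * (σ • E - A) := by
    simp only [Matrix.sub_mul, Matrix.mul_sub, Matrix.smul_mul, Matrix.mul_smul, hEP, hAP]
  have hKr : σ • (Wᵀ * E * V) - Wᵀ * A * V = Wᵀ * (σ • E - A) * V := by
    simp only [Matrix.mul_sub, Matrix.sub_mul, Matrix.mul_smul, Matrix.smul_mul]
  obtain ⟨z, hz⟩ := exists_inv_mulVec_eq_fromCols_mulVec hK hKP hVinf hspanV
  obtain ⟨y, hy⟩ := exists_inv_mulVec_eq_fromCols_mulVec (isUnit_det_transpose _ hK)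
    (by rw [← transpose_mul, ← hKP, transpose_mul])
    (by simpa only [transpose_sub, transpose_one] using hWinf) hspanW
  rw [hKr] at hred ⊢
  subst hV hW
  exact bitangential_hermite_of_eq_mulVec _ E _ _ B C hK ((isUnit_iff_isUnit_det _).mp hred) hz hy

/-- Interpolatory model reduction of DAEs (Theorem 3.1 of Gugercin–Stykel–Wyatt,
bitangential Hermite condition).  With `V = [V_f, V_∞]`, `W = [W_f, W_∞]`, where
the column span of `V_∞` contains the range of `I − P_r`, the column span of
`W_∞` contains the range of `(I − P_l)ᵀ`, `(σE − A)⁻¹ P_l B b` lies in the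
column span of `V_f`, and `((σE − A)ᵀ)⁻¹ P_rᵀ Cᵀ c` lies in the column span of
`W_f`, the Petrov–Galerkin reduced model satisfies `cᵀ G′(σ) b = cᵀ G_r′(σ) b`;
explicitly, `cᵀ C (σE − A)⁻¹ E (σE − A)⁻¹ B b
  = cᵀ C_r (σE_r − A_r)⁻¹ E_r (σE_r − A_r)⁻¹ B_r b`. -/
theorem dae_bitangential_hermite_interpolation
    (n m p k kinf : ℕ)
    (E A : Matrix (Fin n) (Fin n) ℂ)
    (B : Matrix (Fin n) (Fin m) ℂ)
    (C : Matrix (Fin p) (Fin n) ℂ)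
    (Pl Pr : Matrix (Fin n) (Fin n) ℂ)
    (hPl : Pl * Pl = Pl) (hPr : Pr * Pr = Pr)
    (hEP : E * Pr = Pl * E) (hAP : A * Pr = Pl * A)
    (Vf Wf : Matrix (Fin n) (Fin k) ℂ)
    (Vinf Winf : Matrix (Fin n) (Fin kinf) ℂ)
    (V W : Matrix (Fin n) (Fin k ⊕ Fin kinf) ℂ)
    (hV : V = fromCols Vf Vinf)
    (hW : W = fromCols Wf Winf)
    (hVinf : ∀ x : Fin n → ℂ, ∃ y : Fin kinf → ℂ,
      (1 - Pr).mulVec x = Vinf.mulVec y)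
    (hWinf : ∀ x : Fin n → ℂ, ∃ y : Fin kinf → ℂ,
      ((1 - Pl)ᵀ).mulVec x = Winf.mulVec y)
    (σ : ℂ) (b : Fin m → ℂ) (c : Fin p → ℂ)
    (hfull : IsUnit (σ • E - A))
    (hspanV : ∃ ζ : Fin k → ℂ,
      (σ • E - A)⁻¹.mulVec (Pl.mulVec (B.mulVec b)) = Vf.mulVec ζ)
    (hspanW : ∃ ζ : Fin k → ℂ,
      ((σ • E - A)ᵀ)⁻¹.mulVec (Prᵀ.mulVec (Cᵀ.mulVec c)) = Wf.mulVec ζ)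
    (hred : IsUnit (σ • (Wᵀ * E * V) - Wᵀ * A * V)) :
    c ⬝ᵥ (C * (σ • E - A)⁻¹ * E * (σ • E - A)⁻¹ * B).mulVec b
      = c ⬝ᵥ ((C * V) * (σ • (Wᵀ * E * V) - Wᵀ * A * V)⁻¹ * (Wᵀ * E * V)
              * (σ • (Wᵀ * E * V) - Wᵀ * A * V)⁻¹ * (Wᵀ * B)).mulVec b :=
  dae_bitangential_hermite_interpolation_general n m p k kinf E A B C Pl Pr hEP hAP Vf Wf Vinf Winf
    V W hV hW hVinf hWinf σ b c hfull hspanV hspanW hred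
end

section
/- Consider the index-2 Stokes-type DAE with E₁₁ ∈ ℂ^{n₁×n₁} invertible, A₁₁ ∈ ℂ^{n₁×n₁}, A₂₁ ∈ ℂ^{n₂×n₁} such that A₂₁ E₁₁^{-1} A₂₁ᵀ is invertible, B₁ ∈ ℂ^{n₁×m}, C₁ ∈ ℂ^{p×n₁}, D ∈ ℂ^{p×m}. Let 𝔼 = [[E₁₁, 0],[0, 0]], 𝔸 = [[A₁₁, A₂₁ᵀ],[A₂₁, 0]] ∈ ℂ^{(n₁+n₂)×(n₁+n₂)}, 𝔹 = [B₁; 0], ℭ = [C₁, 0], and G(s) = ℭ(s𝔼 − 𝔸)^{-1}𝔹 + D. Let σ₁,…,σ_r ∈ ℂ, b₁,…,b_r ∈ ℂ^m, c₁,…,c_r ∈ ℂ^p, and suppose for each i the saddle-point matrices [[σᵢE₁₁ − A₁₁, A₂₁ᵀ],[A₂₁, 0]] and [[σᵢE₁₁ᵀ − A₁₁ᵀ, A₂₁ᵀ],[A₂₁, 0]] are invertible, and let (vᵢ, zᵢ) and (wᵢ, qᵢ) solve [[σᵢE₁₁ − A₁₁, A₂₁ᵀ],[A₂₁, 0]][vᵢ;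 zᵢ] = [B₁ bᵢ; 0] and [[σᵢE₁₁ᵀ − A₁₁ᵀ, A₂₁ᵀ],[A₂₁, 0]][wᵢ; qᵢ] = [C₁ᵀ cᵢ; 0]. Set V = [v₁,…,v_r], W = [w₁,…,w_r] ∈ ℂ^{n₁×r} and G̃(s) = C₁V (s Wᵀ E₁₁ V − Wᵀ A₁₁ V)^{-1} Wᵀ B₁ + D. Then for each j such that σⱼ Wᵀ E₁₁ V − Wᵀ A₁₁ V is invertible, the right tangential interpolation condition G(σⱼ) bⱼ = G̃(σⱼ) bⱼ holds. -/
/-!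
The saddle-point matrix `[[σE₁₁ - A₁₁, A₂₁ᵀ], [A₂₁, 0]]` is conjugate to the pencil `σ𝔼 - 𝔸` by
`diag(1, -1)`, so `(vⱼ, -zⱼ)` solves `(σⱼ𝔼 - 𝔸) ξ = 𝔹 bⱼ` and `G(σⱼ) bⱼ = C₁ vⱼ + D bⱼ`.
On the reduced side, `V eⱼ = vⱼ` and the columns of `W` lie in `ker A₂₁`, so `Wᵀ A₂₁ᵀ = 0` kills the
pressure term: projecting the first block row of the saddle-point system by `Wᵀ` shows that
`(σⱼ WᵀE₁₁V - WᵀA₁₁V) eⱼ = WᵀB₁ bⱼ`, hence `G̃(σⱼ) bⱼ = C₁ V eⱼ + D bⱼ` as well.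
-/

open Matrix

namespace Matrix

variable {R : Type*} [CommRing R] {k l m n p : Type*}

section Blocks

theorem smul_fromBlocks_sub_fromBlocks (σ : R) (E A : Matrix m m R) (B : Matrix m n R)
    (C : Matrix n m R) :
    σ • fromBlocks E 0 0 0 - fromBlocks A B C 0 = fromBlocks (σ • E - A) (-B) (-C) 0 := by
  rw [fromBlocks_smul, sub_eq_add_neg, fromBlocks_neg, fromBlocks_add]
  simp only [smul_zero, zero_add, neg_zero, add_zero, sub_eq_add_neg]

variable [Fintype m] [Fintype n]

theorem fromBlocks_mulVec_sumElim_eq_sumElim_iff {A : Matrix m m R} {B : Matrix m n R}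
    {C : Matrix n m R} {D : Matrix n n R} {x f : m → R} {y g : n → R} :
    fromBlocks A B C D *ᵥ Sum.elim x y = Sum.elim f g ↔
      A *ᵥ x + B *ᵥ y = f ∧ C *ᵥ x + D *ᵥ y = g := by
  rw [fromBlocks_mulVec, Sum.elim_comp_inl, Sum.elim_comp_inr, Sum.elim_eq_iff]

variable [DecidableEq m] [DecidableEq n]

theorem fromBlocks_neg_neg_eq_mul_mul (A : Matrix m m R) (B : Matrix m n R)
    (C : Matrix n m R) (D : Matrix n n R) :
    fromBlocks A (-B) (-C) D =
      fromBlocks 1 0 0 (-1) * fromBlocks A B C D * fromBlocks 1 0 0 (-1) := by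
  simp [fromBlocks_multiply]

theorem isUnit_fromBlocks_neg_neg {A : Matrix m m R} {B : Matrix m n R}
    {C : Matrix n m R} {D : Matrix n n R} (h : IsUnit (fromBlocks A B C D)) :
    IsUnit (fromBlocks A (-B) (-C) D) := by
  have hJ : IsUnit (fromBlocks 1 0 0 (-1) : Matrix (m ⊕ n) (m ⊕ n) R) :=
    IsUnit.of_mul_eq_one (fromBlocks 1 0 0 (-1)) (by simp [fromBlocks_multiply, ← fromBlocks_one])
  rw [fromBlocks_neg_neg_eq_mul_mul]
  exact (hJ.mul h).mul hJ

end Blocks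

theorem mul_inv_mul_mulVec_of_mulVec_eq [Fintype m] [DecidableEq m] [Fintype n]
    {M : Matrix m m R} (hM : IsUnit M) (P : Matrix l m R) (N : Matrix m n R)
    {u : n → R} {ξ : m → R} (h : M *ᵥ ξ = N *ᵥ u) :
    (P * M⁻¹ * N) *ᵥ u = P *ᵥ ξ := by
  have := hM.invertible
  rw [← mulVec_mulVec, ← mulVec_mulVec, inv_mulVec_eq_vec h.symm]

theorem mul_transpose_of_eq_zero_of_mulVec_eq_zero [Fintype m] (A : Matrix n m R) {w : k → m → R}
    (hw : ∀ i, A *ᵥ w i = 0) : A * (of w)ᵀ = 0 := by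
  ext a i
  simpa [mulVec, dotProduct, mul_apply] using congrFun (hw i) a

theorem transpose_mul_mul_sub_mul_mul [Fintype m] [Fintype n] (σ : R) (W V : Matrix n m R)
    (E A : Matrix n n R) :
    σ • (Wᵀ * E * V) - Wᵀ * A * V = Wᵀ * (σ • E - A) * V := by
  rw [Matrix.mul_sub, Matrix.sub_mul, Matrix.mul_smul, Matrix.smul_mul]

theorem transpose_mul_mul_mulVec_eq_of_transpose_mul_eq_zero [Fintype m] [Fintype n] [Fintype l]
    [Fintype p] {W V : Matrix n m R} {K : Matrix n n R} {G : Matrix n l R} {B : Matrix n p R}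
    {e : m → R} {y : l → R} {u : p → R} (hWG : Wᵀ * G = 0) (h : K *ᵥ (V *ᵥ e) + G *ᵥ y = B *ᵥ u) :
    (Wᵀ * K * V) *ᵥ e = (Wᵀ * B) *ᵥ u := by
  rw [← mulVec_mulVec, ← mulVec_mulVec, ← mulVec_mulVec, ← h, mulVec_add, mulVec_mulVec y, hWG,
    zero_mulVec, add_zero]

end Matrix

theorem index2_right_tangential_interpolation_general
    (n₁ n₂ m p r : ℕ)
    (E₁₁ A₁₁ : Matrix (Fin n₁) (Fin n₁) ℂ)
    (A₂₁ : Matrix (Fin n₂) (Fin n₁) ℂ)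
    (B₁ : Matrix (Fin n₁) (Fin m) ℂ)
    (C₁ : Matrix (Fin p) (Fin n₁) ℂ)
    (D : Matrix (Fin p) (Fin m) ℂ)
    (σ : Fin r → ℂ) (b : Fin r → Fin m → ℂ) (c : Fin r → Fin p → ℂ)
    (v w : Fin r → Fin n₁ → ℂ) (z q : Fin r → Fin n₂ → ℂ)
    (hsadV : ∀ i, IsUnit (fromBlocks (σ i • E₁₁ - A₁₁) A₂₁ᵀ A₂₁ 0))
    (hv : ∀ i, (fromBlocks (σ i • E₁₁ - A₁₁) A₂₁ᵀ A₂₁ 0).mulVec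
        (Sum.elim (v i) (z i)) = Sum.elim (B₁.mulVec (b i)) 0)
    (hw : ∀ i, (fromBlocks (σ i • E₁₁ᵀ - A₁₁ᵀ) A₂₁ᵀ A₂₁ 0).mulVec
        (Sum.elim (w i) (q i)) = Sum.elim (C₁ᵀ.mulVec (c i)) 0)
    (V W : Matrix (Fin n₁) (Fin r) ℂ)
    (hV : V = (Matrix.of v)ᵀ)
    (hW : W = (Matrix.of w)ᵀ)
    (j : Fin r)
    (hred : IsUnit (σ j • (Wᵀ * E₁₁ * V) - Wᵀ * A₁₁ * V)) :
    (Matrix.fromCols C₁ (0 : Matrix (Fin p) (Fin n₂) ℂ)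
        * (σ j • fromBlocks E₁₁ 0 0 0 - fromBlocks A₁₁ A₂₁ᵀ A₂₁ 0)⁻¹
        * fromRows B₁ (0 : Matrix (Fin n₂) (Fin m) ℂ) + D).mulVec (b j)
      = (C₁ * V * (σ j • (Wᵀ * E₁₁ * V) - Wᵀ * A₁₁ * V)⁻¹ * (Wᵀ * B₁)
          + D).mulVec (b j) := by
  obtain ⟨hKv, hAv⟩ := fromBlocks_mulVec_sumElim_eq_sumElim_iff.1 (hv j)
  rw [zero_mulVec, add_zero] at hAv
  have hVe : V *ᵥ Pi.single j 1 = v j := by rw [mulVec_single_one, hV]; rfl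
  have hWA : Wᵀ * A₂₁ᵀ = 0 := by
    rw [← transpose_mul, hW, mul_transpose_of_eq_zero_of_mulVec_eq_zero A₂₁ fun i => by
      simpa using (fromBlocks_mulVec_sumElim_eq_sumElim_iff.1 (hw i)).2, transpose_zero]
  have hfullUnit : IsUnit (σ j • fromBlocks E₁₁ 0 0 0 - fromBlocks A₁₁ A₂₁ᵀ A₂₁ 0) := by
    rw [smul_fromBlocks_sub_fromBlocks]
    exact isUnit_fromBlocks_neg_neg (hsadV j)
  have hfull : (σ j • fromBlocks E₁₁ 0 0 0 - fromBlocks A₁₁ A₂₁ᵀ A₂₁ 0) *ᵥ Sum.elim (v j) (-z j)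
      = fromRows B₁ 0 *ᵥ b j := by
    rw [smul_fromBlocks_sub_fromBlocks, fromRows_mulVec, zero_mulVec,
      fromBlocks_mulVec_sumElim_eq_sumElim_iff]
    simp only [neg_mulVec, mulVec_neg, neg_neg, hKv, hAv, zero_mulVec, add_zero, neg_zero, true_and]
  have hreduced : (σ j • (Wᵀ * E₁₁ * V) - Wᵀ * A₁₁ * V) *ᵥ Pi.single j 1 = (Wᵀ * B₁) *ᵥ b j := by
    rw [transpose_mul_mul_sub_mul_mul]
    exact transpose_mul_mul_mulVec_eq_of_transpose_mul_eq_zero hWA (by rw [hVe]; exact hKv)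
  rw [add_mulVec, add_mulVec, mul_inv_mul_mulVec_of_mulVec_eq hfullUnit _ _ hfull,
    fromCols_mulVec_sumElim, zero_mulVec, add_zero,
    mul_inv_mul_mulVec_of_mulVec_eq hred _ _ hreduced, ← mulVec_mulVec, hVe]

/-- Interpolatory model reduction for index-2 Stokes-type DAEs without spectral
projectors (right tangential condition).  The bases `V` and `W` are built from
solutions of the saddle-point systems; the reduced model interpolates `G` from
the right at each interpolation point. -/
theorem index2_right_tangential_interpolation
    (n₁ n₂ m p r : ℕ)
    (E₁₁ A₁₁ : Matrix (Fin n₁) (Fin n₁) ℂ)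
    (A₂₁ : Matrix (Fin n₂) (Fin n₁) ℂ)
    (B₁ : Matrix (Fin n₁) (Fin m) ℂ)
    (C₁ : Matrix (Fin p) (Fin n₁) ℂ)
    (D : Matrix (Fin p) (Fin m) ℂ)
    (hE : IsUnit E₁₁)
    (hSchur : IsUnit (A₂₁ * E₁₁⁻¹ * A₂₁ᵀ))
    (σ : Fin r → ℂ) (b : Fin r → Fin m → ℂ) (c : Fin r → Fin p → ℂ)
    (v w : Fin r → Fin n₁ → ℂ) (z q : Fin r → Fin n₂ → ℂ)
    (hsadV : ∀ i, IsUnit (fromBlocks (σ i • E₁₁ - A₁₁) A₂₁ᵀ A₂₁ 0))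
    (hsadW : ∀ i, IsUnit (fromBlocks (σ i • E₁₁ᵀ - A₁₁ᵀ) A₂₁ᵀ A₂₁ 0))
    (hv : ∀ i, (fromBlocks (σ i • E₁₁ - A₁₁) A₂₁ᵀ A₂₁ 0).mulVec
        (Sum.elim (v i) (z i)) = Sum.elim (B₁.mulVec (b i)) 0)
    (hw : ∀ i, (fromBlocks (σ i • E₁₁ᵀ - A₁₁ᵀ) A₂₁ᵀ A₂₁ 0).mulVec
        (Sum.elim (w i) (q i)) = Sum.elim (C₁ᵀ.mulVec (c i)) 0)
    (V W : Matrix (Fin n₁) (Fin r) ℂ)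
    (hV : V = (Matrix.of v)ᵀ)
    (hW : W = (Matrix.of w)ᵀ)
    (j : Fin r)
    (hred : IsUnit (σ j • (Wᵀ * E₁₁ * V) - Wᵀ * A₁₁ * V)) :
    (Matrix.fromCols C₁ (0 : Matrix (Fin p) (Fin n₂) ℂ)
        * (σ j • fromBlocks E₁₁ 0 0 0 - fromBlocks A₁₁ A₂₁ᵀ A₂₁ 0)⁻¹
        * fromRows B₁ (0 : Matrix (Fin n₂) (Fin m) ℂ) + D).mulVec (b j)
      = (C₁ * V * (σ j • (Wᵀ * E₁₁ * V) - Wᵀ * A₁₁ * V)⁻¹ * (Wᵀ * B₁)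
          + D).mulVec (b j) :=
  index2_right_tangential_interpolation_general n₁ n₂ m p r E₁₁ A₁₁ A₂₁ B₁ C₁ D σ b c v w z q hsadV
    hv hw V W hV hW j hred
end

section
/- Consider the index-2 Stokes-type DAE with E₁₁ ∈ ℂ^{n₁×n₁} invertible, A₁₁ ∈ ℂ^{n₁×n₁}, A₂₁ ∈ ℂ^{n₂×n₁} such that A₂₁ E₁₁^{-1} A₂₁ᵀ is invertible, B₁ ∈ ℂ^{n₁×m}, C₁ ∈ ℂ^{p×n₁}, D ∈ ℂ^{p×m}, transfer function G(s) = ℭ(s𝔼 − 𝔸)^{-1}𝔹 + D where 𝔼 = diag(E₁₁, 0), 𝔸 = [[A₁₁, A₂₁ᵀ],[A₂₁, 0]], 𝔹 = [B₁; 0], ℭ = [C₁, 0]. Let σ₁,…,σ_r ∈ ℂ, b₁,…,b_r ∈ ℂ^m, c₁,…,c_r ∈ ℂ^p, assume for each i the matrices [[σᵢE₁₁ − A₁₁, A₂₁ᵀ],[A₂₁, 0]] and [[σᵢE₁₁ᵀ − A₁₁ᵀ, A₂₁ᵀ],[A₂₁, 0]] are invertible, and let (vᵢ, zᵢ) and (wᵢ,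 qᵢ) solve [[σᵢE₁₁ − A₁₁, A₂₁ᵀ],[A₂₁, 0]][vᵢ; zᵢ] = [B₁ bᵢ; 0] and [[σᵢE₁₁ᵀ − A₁₁ᵀ, A₂₁ᵀ],[A₂₁, 0]][wᵢ; qᵢ] = [C₁ᵀ cᵢ; 0]. Set V = [v₁,…,v_r], W = [w₁,…,w_r], Ẽ = Wᵀ E₁₁ V, Ã = Wᵀ A₁₁ V. Then for each j such that σⱼ Ẽ − Ã is invertible, the bitangential Hermite condition cⱼᵀ G′(σⱼ) bⱼ = cⱼᵀ G̃′(σⱼ) bⱼ holds, where G̃(s) = C₁V (sẼ − Ã)^{-1} Wᵀ B₁ + D; explicitly, cⱼᵀ ℭ (σⱼ𝔼 − 𝔸)^{-1} 𝔼 (σⱼ𝔼 − 𝔸)^{-1} 𝔹 bⱼ = cⱼᵀ C₁V (σⱼẼ − Ã)^{-1} Ẽ (σⱼẼ − Ã)^{-1} Wᵀ B₁ bⱼ, and both sides equal wⱼᵀ E₁₁ vⱼ. -/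
/-!
Write `S(σ) = σ𝔼 - 𝔸`. If `S x = 𝔹 b` and `yᵀ S = cᵀ ℭ`, then
`cᵀ ℭ S⁻¹ 𝔼 S⁻¹ 𝔹 b = yᵀ 𝔼 x`. For the full model, `S(σⱼ)` is the saddle-point matrix
conjugated by `diag(1, -1)`, which fixes `ℭ`, `𝔹` and `𝔼`, so we may take `x = (vⱼ, zⱼ)` and
`y = (wⱼ, qⱼ)` and get `wⱼᵀ E₁₁ vⱼ`. For the reduced model, `A₂₁ V = 0` and `A₂₁ W = 0`
make the multiplier terms vanish after projection, so `x = y = eⱼ` work, and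
`eⱼᵀ (Wᵀ E₁₁ V) eⱼ = wⱼᵀ E₁₁ vⱼ` as well.
-/

open Matrix

namespace Matrix

variable {R : Type*} {l m n o : Type*}

theorem fromBlocks_mulVec_sumElim_eq_iff [NonUnitalNonAssocSemiring R] [Fintype m] [Fintype n]
    (A : Matrix l m R) (B : Matrix l n R) (C : Matrix o m R) (D : Matrix o n R)
    (x : m → R) (y : n → R) (f : l → R) (g : o → R) :
    fromBlocks A B C D *ᵥ Sum.elim x y = Sum.elim f g ↔
      A *ᵥ x + B *ᵥ y = f ∧ C *ᵥ x + D *ᵥ y = g := by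
  rw [fromBlocks_mulVec, Sum.elim_comp_inl, Sum.elim_comp_inr, Sum.elim_eq_iff]

theorem sumElim_vecMul_fromBlocks_eq_iff [NonUnitalNonAssocSemiring R] [Fintype l] [Fintype o]
    (A : Matrix l m R) (B : Matrix l n R) (C : Matrix o m R) (D : Matrix o n R)
    (x : l → R) (y : o → R) (f : m → R) (g : n → R) :
    Sum.elim x y ᵥ* fromBlocks A B C D = Sum.elim f g ↔
      x ᵥ* A + y ᵥ* C = f ∧ x ᵥ* B + y ᵥ* D = g := by
  rw [vecMul_fromBlocks, Sum.elim_comp_inl, Sum.elim_comp_inr, Sum.elim_eq_iff]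

theorem dotProduct_mul_inv_mul_inv_mulVec [CommRing R] [Fintype n] [DecidableEq n] [Fintype l]
    [Fintype o] {S E : Matrix n n R} {B : Matrix n l R} {C : Matrix o n R} {b : l → R}
    {c : o → R} {x y : n → R} (hS : IsUnit S) (hx : S *ᵥ x = B *ᵥ b) (hy : y ᵥ* S = c ᵥ* C) :
    c ⬝ᵥ ((C * S⁻¹ * E * S⁻¹ * B) *ᵥ b) = y ⬝ᵥ E *ᵥ x := by
  have hdet : IsUnit S.det := (isUnit_iff_isUnit_det S).mp hS
  have hx' : S⁻¹ *ᵥ (B *ᵥ b) = x := by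
    rw [← hx, mulVec_mulVec, nonsing_inv_mul S hdet, one_mulVec]
  have hy' : (c ᵥ* C) ᵥ* S⁻¹ = y := by
    rw [← hy, vecMul_vecMul, mul_nonsing_inv S hdet, vecMul_one]
  rw [← mulVec_mulVec, ← mulVec_mulVec, hx', dotProduct_mulVec, ← vecMul_vecMul,
    ← vecMul_vecMul, hy', ← dotProduct_mulVec]

theorem fromBlocks_neg_offDiag [Ring R] [Fintype l] [Fintype m] [Fintype n] [Fintype o]
    [DecidableEq l] [DecidableEq m] [DecidableEq n] [DecidableEq o]
    (A : Matrix l m R) (B : Matrix l n R) (C : Matrix o m R) (D : Matrix o n R) :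
    fromBlocks A (-B) (-C) D =
      fromBlocks (1 : Matrix l l R) 0 0 (-1 : Matrix o o R) * fromBlocks A B C D *
        fromBlocks (1 : Matrix m m R) 0 0 (-1 : Matrix n n R) := by
  simp [fromBlocks_multiply]

theorem saddlePoint_hermite_moment [CommRing R] [Fintype l] [Fintype m] [Fintype n] [Fintype o]
    [DecidableEq m] [DecidableEq n] {E A : Matrix m m R} {P : Matrix m n R} {Q : Matrix n m R}
    {B : Matrix m l R} {C : Matrix o m R} {σ : R} {b : l → R} {c : o → R} {v w : m → R}
    {z q : n → R} (hT : IsUnit (fromBlocks (σ • E - A) P Q 0))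
    (hv : fromBlocks (σ • E - A) P Q 0 *ᵥ Sum.elim v z = Sum.elim (B *ᵥ b) 0)
    (hw : Sum.elim w q ᵥ* fromBlocks (σ • E - A) P Q 0 = Sum.elim (c ᵥ* C) 0) :
    c ⬝ᵥ ((fromCols C (0 : Matrix o n R) * (σ • fromBlocks E 0 0 0 - fromBlocks A P Q 0)⁻¹ *
        fromBlocks E 0 0 (0 : Matrix n n R) * (σ • fromBlocks E 0 0 0 - fromBlocks A P Q 0)⁻¹ *
        fromRows B (0 : Matrix n l R)) *ᵥ b) = w ⬝ᵥ E *ᵥ v := by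
  set T := fromBlocks (σ • E - A) P Q 0
  set J := fromBlocks (1 : Matrix m m R) 0 0 (-1 : Matrix n n R)
  set E' := fromBlocks E 0 0 (0 : Matrix n n R)
  set C' := fromCols C (0 : Matrix o n R)
  set B' := fromRows B (0 : Matrix n l R)
  have hJ : J * J = 1 := by simp [J, fromBlocks_multiply]
  have hS : σ • E' - fromBlocks A P Q 0 = J * T * J := by
    rw [← fromBlocks_neg_offDiag]
    simp [E', fromBlocks_smul, sub_eq_add_neg, fromBlocks_neg, fromBlocks_add]
  have hSinv : (J * T * J)⁻¹ = J * T⁻¹ * J := by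
    rw [mul_inv_rev, mul_inv_rev, inv_eq_right_inv hJ, Matrix.mul_assoc]
  have hCJ : C' * J = C' := by simp [C', J, fromCols_mul_fromBlocks]
  have hJEJ : J * E' * J = E' := by simp [J, E', fromBlocks_multiply]
  have hJB : J * B' = B' := by simp [J, B', fromBlocks_mul_fromRows]
  have hconj : C' * (J * T⁻¹ * J) * E' * (J * T⁻¹ * J) * B' =
      (C' * J) * T⁻¹ * (J * E' * J) * T⁻¹ * (J * B') := by
    simp only [Matrix.mul_assoc]
  rw [hS, hSinv, hconj, hCJ, hJEJ, hJB,
    dotProduct_mul_inv_mul_inv_mulVec hT (by simpa [B', fromRows_mulVec] using hv)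
      (by simpa [C', vecMul_fromCols] using hw)]
  simp [E', fromBlocks_mulVec, sumElim_dotProduct_sumElim]

theorem projected_hermite_moment [CommRing R] [Fintype l] [Fintype m] [Fintype n] [Fintype o]
    {ρ : Type*} [Fintype ρ] [DecidableEq ρ] {E A : Matrix m m R} {P : Matrix m n R}
    {Q : Matrix n m R} {B : Matrix m l R} {C : Matrix o m R} {V W : Matrix m ρ R} {σ : R}
    {b : l → R} {c : o → R} {z q : n → R} {j : ρ}
    (hK : IsUnit (σ • (Wᵀ * E * V) - Wᵀ * A * V))
    (hv : (σ • E - A) *ᵥ V.col j + P *ᵥ z = B *ᵥ b)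
    (hw : W.col j ᵥ* (σ • E - A) + q ᵥ* Q = c ᵥ* C)
    (hWP : Wᵀ * P = 0) (hQV : Q * V = 0) :
    c ⬝ᵥ ((C * V * (σ • (Wᵀ * E * V) - Wᵀ * A * V)⁻¹ * (Wᵀ * E * V) *
        (σ • (Wᵀ * E * V) - Wᵀ * A * V)⁻¹ * (Wᵀ * B)) *ᵥ b) = W.col j ⬝ᵥ E *ᵥ V.col j := by
  have hKeq : σ • (Wᵀ * E * V) - Wᵀ * A * V = Wᵀ * (σ • E - A) * V := by
    simp only [Matrix.mul_sub, Matrix.sub_mul, Matrix.mul_smul, Matrix.smul_mul]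
  have hKe : (σ • (Wᵀ * E * V) - Wᵀ * A * V) *ᵥ Pi.single j 1 = (Wᵀ * B) *ᵥ b := by
    rw [hKeq, ← mulVec_mulVec, mulVec_single_one, ← mulVec_mulVec, eq_sub_of_add_eq hv,
      mulVec_sub, mulVec_mulVec, mulVec_mulVec, hWP, zero_mulVec, sub_zero]
  have heK : Pi.single j 1 ᵥ* (σ • (Wᵀ * E * V) - Wᵀ * A * V) = c ᵥ* (C * V) := by
    rw [hKeq, ← vecMul_vecMul, ← vecMul_vecMul _ Wᵀ, single_one_vecMul, row_transpose,
      eq_sub_of_add_eq hw, sub_vecMul, vecMul_vecMul, vecMul_vecMul, hQV, vecMul_zero, sub_zero]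
  rw [dotProduct_mul_inv_mul_inv_mulVec hK hKe heK, ← mulVec_mulVec, ← mulVec_mulVec,
    mulVec_single_one, dotProduct_mulVec, single_one_vecMul, row_transpose]

end Matrix

theorem index2_bitangential_hermite_interpolation_general
    (n₁ n₂ m p r : ℕ)
    (E₁₁ A₁₁ : Matrix (Fin n₁) (Fin n₁) ℂ)
    (A₂₁ : Matrix (Fin n₂) (Fin n₁) ℂ)
    (B₁ : Matrix (Fin n₁) (Fin m) ℂ)
    (C₁ : Matrix (Fin p) (Fin n₁) ℂ)
    (σ : Fin r → ℂ) (b : Fin r → Fin m → ℂ) (c : Fin r → Fin p → ℂ)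
    (v w : Fin r → Fin n₁ → ℂ) (z q : Fin r → Fin n₂ → ℂ)
    (hsadV : ∀ i, IsUnit (fromBlocks (σ i • E₁₁ - A₁₁) A₂₁ᵀ A₂₁ 0))
    (hv : ∀ i, (fromBlocks (σ i • E₁₁ - A₁₁) A₂₁ᵀ A₂₁ 0).mulVec
        (Sum.elim (v i) (z i)) = Sum.elim (B₁.mulVec (b i)) 0)
    (hw : ∀ i, (fromBlocks (σ i • E₁₁ᵀ - A₁₁ᵀ) A₂₁ᵀ A₂₁ 0).mulVec
        (Sum.elim (w i) (q i)) = Sum.elim (C₁ᵀ.mulVec (c i)) 0)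
    (V W : Matrix (Fin n₁) (Fin r) ℂ)
    (hV : V = (Matrix.of v)ᵀ)
    (hW : W = (Matrix.of w)ᵀ)
    (j : Fin r)
    (hred : IsUnit (σ j • (Wᵀ * E₁₁ * V) - Wᵀ * A₁₁ * V)) :
    (c j ⬝ᵥ ((fromCols C₁ (0 : Matrix (Fin p) (Fin n₂) ℂ)
        * (σ j • fromBlocks E₁₁ 0 0 0 - fromBlocks A₁₁ A₂₁ᵀ A₂₁ 0)⁻¹
        * fromBlocks E₁₁ 0 0 (0 : Matrix (Fin n₂) (Fin n₂) ℂ)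
        * (σ j • fromBlocks E₁₁ 0 0 0 - fromBlocks A₁₁ A₂₁ᵀ A₂₁ 0)⁻¹
        * fromRows B₁ (0 : Matrix (Fin n₂) (Fin m) ℂ)).mulVec (b j))
      = c j ⬝ᵥ ((C₁ * V * (σ j • (Wᵀ * E₁₁ * V) - Wᵀ * A₁₁ * V)⁻¹ * (Wᵀ * E₁₁ * V)
          * (σ j • (Wᵀ * E₁₁ * V) - Wᵀ * A₁₁ * V)⁻¹ * (Wᵀ * B₁)).mulVec (b j)))
    ∧ c j ⬝ᵥ ((fromCols C₁ (0 : Matrix (Fin p) (Fin n₂) ℂ)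
        * (σ j • fromBlocks E₁₁ 0 0 0 - fromBlocks A₁₁ A₂₁ᵀ A₂₁ 0)⁻¹
        * fromBlocks E₁₁ 0 0 (0 : Matrix (Fin n₂) (Fin n₂) ℂ)
        * (σ j • fromBlocks E₁₁ 0 0 0 - fromBlocks A₁₁ A₂₁ᵀ A₂₁ 0)⁻¹
        * fromRows B₁ (0 : Matrix (Fin n₂) (Fin m) ℂ)).mulVec (b j))
      = w j ⬝ᵥ E₁₁.mulVec (v j) := by
  have hwT : ∀ i, Sum.elim (w i) (q i) ᵥ* fromBlocks (σ i • E₁₁ - A₁₁) A₂₁ᵀ A₂₁ 0 =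
      Sum.elim (c i ᵥ* C₁) 0 := by
    intro i
    have hT : (fromBlocks (σ i • E₁₁ - A₁₁) A₂₁ᵀ A₂₁ 0)ᵀ =
        fromBlocks (σ i • E₁₁ᵀ - A₁₁ᵀ) A₂₁ᵀ A₂₁ 0 := by
      simp [fromBlocks_transpose]
    rw [← mulVec_transpose, hT, hw i, mulVec_transpose]
  have hvBlocks i := (fromBlocks_mulVec_sumElim_eq_iff _ _ _ _ _ _ _ _).1 (hv i)
  have hwBlocks i := (sumElim_vecMul_fromBlocks_eq_iff _ _ _ _ _ _ _ _).1 (hwT i)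
  have hfull := saddlePoint_hermite_moment (hsadV j) (hv j) (hwT j)
  subst hV hW
  have hWA : (of w)ᵀᵀ * A₂₁ᵀ = 0 := by
    ext i k
    simpa [mul_apply, vecMul, dotProduct] using congrFun (hwBlocks i).2 k
  have hAV : A₂₁ * (of v)ᵀ = 0 := by
    ext k i
    simpa [mul_apply, mulVec, dotProduct, mul_comm] using congrFun (hvBlocks i).2 k
  have hreduced := projected_hermite_moment hred (hvBlocks j).1 (hwBlocks j).1 hWA hAV
  exact ⟨hfull.trans hreduced.symm, hfull⟩

/-- Interpolatory model reduction for index-2 Stokes-type DAEs without spectral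
projectors (bitangential Hermite condition).  The bases `V` and `W` are built
from solutions of the saddle-point systems; the reduced model matches the
bitangential Hermite data `cⱼᵀ G′(σⱼ) bⱼ`, and both sides equal `wⱼᵀ E₁₁ vⱼ`. -/
theorem index2_bitangential_hermite_interpolation
    (n₁ n₂ m p r : ℕ)
    (E₁₁ A₁₁ : Matrix (Fin n₁) (Fin n₁) ℂ)
    (A₂₁ : Matrix (Fin n₂) (Fin n₁) ℂ)
    (B₁ : Matrix (Fin n₁) (Fin m) ℂ)
    (C₁ : Matrix (Fin p) (Fin n₁) ℂ)
    (D : Matrix (Fin p) (Fin m) ℂ)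
    (hE : IsUnit E₁₁)
    (hSchur : IsUnit (A₂₁ * E₁₁⁻¹ * A₂₁ᵀ))
    (σ : Fin r → ℂ) (b : Fin r → Fin m → ℂ) (c : Fin r → Fin p → ℂ)
    (v w : Fin r → Fin n₁ → ℂ) (z q : Fin r → Fin n₂ → ℂ)
    (hsadV : ∀ i, IsUnit (fromBlocks (σ i • E₁₁ - A₁₁) A₂₁ᵀ A₂₁ 0))
    (hsadW : ∀ i, IsUnit (fromBlocks (σ i • E₁₁ᵀ - A₁₁ᵀ) A₂₁ᵀ A₂₁ 0))
    (hv : ∀ i, (fromBlocks (σ i • E₁₁ - A₁₁) A₂₁ᵀ A₂₁ 0).mulVec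
        (Sum.elim (v i) (z i)) = Sum.elim (B₁.mulVec (b i)) 0)
    (hw : ∀ i, (fromBlocks (σ i • E₁₁ᵀ - A₁₁ᵀ) A₂₁ᵀ A₂₁ 0).mulVec
        (Sum.elim (w i) (q i)) = Sum.elim (C₁ᵀ.mulVec (c i)) 0)
    (V W : Matrix (Fin n₁) (Fin r) ℂ)
    (hV : V = (Matrix.of v)ᵀ)
    (hW : W = (Matrix.of w)ᵀ)
    (j : Fin r)
    (hred : IsUnit (σ j • (Wᵀ * E₁₁ * V) - Wᵀ * A₁₁ * V)) :
    (c j ⬝ᵥ ((fromCols C₁ (0 : Matrix (Fin p) (Fin n₂) ℂ)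
        * (σ j • fromBlocks E₁₁ 0 0 0 - fromBlocks A₁₁ A₂₁ᵀ A₂₁ 0)⁻¹
        * fromBlocks E₁₁ 0 0 (0 : Matrix (Fin n₂) (Fin n₂) ℂ)
        * (σ j • fromBlocks E₁₁ 0 0 0 - fromBlocks A₁₁ A₂₁ᵀ A₂₁ 0)⁻¹
        * fromRows B₁ (0 : Matrix (Fin n₂) (Fin m) ℂ)).mulVec (b j))
      = c j ⬝ᵥ ((C₁ * V * (σ j • (Wᵀ * E₁₁ * V) - Wᵀ * A₁₁ * V)⁻¹ * (Wᵀ * E₁₁ * V)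
          * (σ j • (Wᵀ * E₁₁ * V) - Wᵀ * A₁₁ * V)⁻¹ * (Wᵀ * B₁)).mulVec (b j)))
    ∧ c j ⬝ᵥ ((fromCols C₁ (0 : Matrix (Fin p) (Fin n₂) ℂ)
        * (σ j • fromBlocks E₁₁ 0 0 0 - fromBlocks A₁₁ A₂₁ᵀ A₂₁ 0)⁻¹
        * fromBlocks E₁₁ 0 0 (0 : Matrix (Fin n₂) (Fin n₂) ℂ)
        * (σ j • fromBlocks E₁₁ 0 0 0 - fromBlocks A₁₁ A₂₁ᵀ A₂₁ 0)⁻¹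
        * fromRows B₁ (0 : Matrix (Fin n₂) (Fin m) ℂ)).mulVec (b j))
      = w j ⬝ᵥ E₁₁.mulVec (v j) :=
  index2_bitangential_hermite_interpolation_general n₁ n₂ m p r E₁₁ A₁₁ A₂₁ B₁ C₁ σ b c v w z q
    hsadV hv hw V W hV hW j hred
end

section
/- Consider the index-2 Stokes-type DAE with E₁₁ ∈ ℂ^{n₁×n₁} invertible, A₁₁ ∈ ℂ^{n₁×n₁}, A₂₁ ∈ ℂ^{n₂×n₁} such that A₂₁ E₁₁^{-1} A₂₁ᵀ is invertible, B₁ ∈ ℂ^{n₁×m}, C₁ ∈ ℂ^{p×n₁}, D ∈ ℂ^{p×m}, transfer function G(s) = ℭ(s𝔼 − 𝔸)^{-1}𝔹 + D where 𝔼 = diag(E₁₁, 0), 𝔸 = [[A₁₁, A₂₁ᵀ],[A₂₁, 0]], 𝔹 = [B₁; 0], ℭ = [C₁, 0]. Let V, W ∈ ℂ^{n₁×r} be matrices whose columns satisfy A₂₁ V = 0 and A₂₁ W = 0, and assume Ẽ = Wᵀ E₁₁ V is invertible. Let G̃(s) = C₁V (sẼ − Wᵀ A₁₁ V)^{-1}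 Wᵀ B₁ + D. Then s𝔼 − 𝔸 and sẼ − WᵀA₁₁V are invertible for all sufficiently large real s, and the error G(s) − G̃(s) tends to the zero matrix as s → +∞ along the real axis; that is, the error transfer function contains no polynomial part (the reduced model exactly matches the polynomial part of G). -/
/-!
Both transfer functions are strictly proper. If the leading matrix `E` of a pencil is invertible,
then `(s • E - A)⁻¹ = s⁻¹ • (E - s⁻¹ • A)⁻¹ → 0`, which settles the reduced model. The leading
matrix `diag(E₁₁, 0)` of the full pencil is singular, but conjugating the pencil by
`diag(1, -s • 1)`, which fixes `fromCols C₁ 0` and `fromRows B₁ 0`, turns it into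
`s • [[E₁₁, A₂₁ᵀ], [A₂₁, 0]] - diag(A₁₁, 0)`, whose leading saddle-point matrix is invertible
because its Schur complement `-A₂₁ E₁₁⁻¹ A₂₁ᵀ` is.
-/

open Matrix Filter Topology Bornology

namespace Matrix

section Pencil

variable {n 𝕜 : Type*} [NormedField 𝕜]

theorem tendsto_sub_inv_smul_cobounded (E A : Matrix n n 𝕜) :
    Tendsto (fun s : 𝕜 => E - s⁻¹ • A) (cobounded 𝕜) (𝓝 E) := by
  simpa using tendsto_const_nhds.sub ((tendsto_inv₀_cobounded (α := 𝕜)).smul_const A)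

variable [Fintype n] [DecidableEq n]

theorem continuousAt_inv_of_isUnit {A : Matrix n n 𝕜} (hA : IsUnit A) :
    ContinuousAt Inv.inv A := by
  refine continuousAt_matrix_inv A ?_
  rw [Ring.inverse_eq_inv']
  exact continuousAt_inv₀ ((isUnit_iff_isUnit_det A).mp hA).ne_zero

theorem eventually_isUnit_of_isUnit {A : Matrix n n 𝕜} (hA : IsUnit A) :
    ∀ᶠ B in 𝓝 A, IsUnit B := by
  have hdet : ContinuousAt det A := continuous_id.matrix_det.continuousAt
  filter_upwards [hdet.eventually_ne ((isUnit_iff_isUnit_det A).mp hA).ne_zero] with B hB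
  exact (isUnit_iff_isUnit_det B).mpr hB.isUnit

theorem eventually_smul_sub_eq_smul_sub_inv_smul {E : Matrix n n 𝕜} (hE : IsUnit E)
    (A : Matrix n n 𝕜) :
    ∀ᶠ s in cobounded 𝕜, s ≠ 0 ∧ IsUnit (E - s⁻¹ • A) ∧ s • E - A = s • (E - s⁻¹ • A) := by
  filter_upwards [(tendsto_sub_inv_smul_cobounded E A).eventually (eventually_isUnit_of_isUnit hE),
    eventually_ne_cobounded 0] with s hunit hs
  exact ⟨hs, hunit, by rw [smul_sub, smul_inv_smul₀ hs]⟩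

theorem eventually_isUnit_smul_sub {E : Matrix n n 𝕜} (hE : IsUnit E) (A : Matrix n n 𝕜) :
    ∀ᶠ s in cobounded 𝕜, IsUnit (s • E - A) := by
  filter_upwards [eventually_smul_sub_eq_smul_sub_inv_smul hE A] with s ⟨hs, hunit, heq⟩
  rw [heq]
  exact (isUnit_smul_iff (Units.mk0 s hs) _).mpr hunit

theorem tendsto_inv_smul_sub_cobounded {E : Matrix n n 𝕜} (hE : IsUnit E) (A : Matrix n n 𝕜) :
    Tendsto (fun s => (s • E - A)⁻¹) (cobounded 𝕜) (𝓝 0) := by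
  have hlim : Tendsto (fun s : 𝕜 => s⁻¹ • (E - s⁻¹ • A)⁻¹) (cobounded 𝕜) (𝓝 0) := by
    have hinv : Tendsto (fun s : 𝕜 => (E - s⁻¹ • A)⁻¹) (cobounded 𝕜) (𝓝 E⁻¹) :=
      (continuousAt_inv_of_isUnit hE).tendsto.comp (tendsto_sub_inv_smul_cobounded E A)
    simpa using tendsto_inv₀_cobounded.smul hinv
  refine hlim.congr' ?_
  filter_upwards [eventually_smul_sub_eq_smul_sub_inv_smul hE A] with s ⟨hs, hunit, heq⟩
  rw [heq]
  exact (inv_smul' _ (Units.mk0 s hs) ((isUnit_iff_isUnit_det _).mp hunit)).symm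

end Pencil

theorem tendsto_mul_mul_of_tendsto_zero {ι m n p q α : Type*} [Fintype m] [Fintype n]
    [NonUnitalNonAssocSemiring α] [TopologicalSpace α] [IsTopologicalSemiring α]
    {l : Filter ι} {F : ι → Matrix m n α} (hF : Tendsto F l (𝓝 0))
    (C : Matrix p m α) (B : Matrix n q α) : Tendsto (fun i => C * F i * B) l (𝓝 0) := by
  have hcont : Continuous fun X : Matrix m n α => C * X * B :=
    (continuous_const.matrix_mul continuous_id).matrix_mul continuous_const
  exact (hcont.tendsto' 0 0 (by simp)).comp hF

section Saddle

variable {m n α : Type*} [Fintype m] [Fintype n] [DecidableEq m] [DecidableEq n] [CommRing α]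

theorem isUnit_fromBlocks_zero₂₂_of_isUnit {E : Matrix m m α} {B : Matrix m n α}
    {C : Matrix n m α} (hE : IsUnit E) (hschur : IsUnit (C * E⁻¹ * B)) :
    IsUnit (fromBlocks E B C 0) := by
  have := hE.invertible
  rw [isUnit_fromBlocks_iff_of_invertible₁₁, invOf_eq_nonsing_inv, zero_sub]
  exact hschur.neg

theorem isUnit_iff_of_mul_mul_eq {S X Y : Matrix n n α} (hS : IsUnit S) (h : S * X * S = Y) :
    IsUnit X ↔ IsUnit Y := by
  rw [← h, ← hS.unit_spec, Units.isUnit_mul_units, Units.isUnit_units_mul]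

theorem inv_eq_of_mul_mul_eq {S X Y : Matrix n n α} (hS : IsUnit S) (h : S * X * S = Y) :
    X⁻¹ = S * Y⁻¹ * S := by
  have hdet := (isUnit_iff_isUnit_det S).mp hS
  rw [← h, mul_inv_rev, mul_inv_rev]
  simp only [Matrix.mul_assoc, nonsing_inv_mul _ hdet, Matrix.mul_one]
  rw [← Matrix.mul_assoc, mul_nonsing_inv _ hdet, Matrix.one_mul]

theorem fromBlocks_neg_smul_mul_saddle_pencil (s : α) (E A : Matrix m m α) (B : Matrix n m α) :
    fromBlocks 1 0 0 (-s • 1) * (s • fromBlocks E 0 0 0 - fromBlocks A Bᵀ B 0)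
        * fromBlocks 1 0 0 (-s • 1)
      = s • fromBlocks E Bᵀ B 0 - fromBlocks A 0 0 0 := by
  simp [sub_eq_add_neg, fromBlocks_smul, fromBlocks_neg, fromBlocks_add, fromBlocks_multiply]

theorem isUnit_fromBlocks_one_neg_smul_one {s : α} (hs : IsUnit s) :
    IsUnit (fromBlocks (1 : Matrix m m α) 0 0 (-s • (1 : Matrix n n α))) := by
  refine isUnit_fromBlocks_zero₂₁.mpr ⟨isUnit_one, ?_⟩
  rw [isUnit_iff_isUnit_det, det_smul, det_one, mul_one]
  exact hs.neg.pow _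

variable {p q : Type*}

theorem isUnit_saddle_pencil_iff {s : α} (hs : IsUnit s) (E A : Matrix m m α)
    (B : Matrix n m α) :
    IsUnit (s • fromBlocks E 0 0 0 - fromBlocks A Bᵀ B 0)
      ↔ IsUnit (s • fromBlocks E Bᵀ B 0 - fromBlocks A 0 0 0) :=
  isUnit_iff_of_mul_mul_eq (isUnit_fromBlocks_one_neg_smul_one hs)
    (fromBlocks_neg_smul_mul_saddle_pencil s E A B)

theorem fromCols_mul_saddle_pencil_inv_mul_fromRows {s : α} (hs : IsUnit s)
    (E A : Matrix m m α) (B : Matrix n m α) (C : Matrix p m α) (F : Matrix m q α) :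
    fromCols C (0 : Matrix p n α) * (s • fromBlocks E 0 0 0 - fromBlocks A Bᵀ B 0)⁻¹
        * fromRows F (0 : Matrix n q α)
      = fromCols C (0 : Matrix p n α) * (s • fromBlocks E Bᵀ B 0 - fromBlocks A 0 0 0)⁻¹
        * fromRows F (0 : Matrix n q α) := by
  rw [inv_eq_of_mul_mul_eq (isUnit_fromBlocks_one_neg_smul_one hs)
      (fromBlocks_neg_smul_mul_saddle_pencil s E A B)]
  simp only [Matrix.mul_assoc, fromBlocks_mul_fromRows]
  simp [← Matrix.mul_assoc, fromCols_mul_fromBlocks]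

end Saddle

end Matrix

theorem index2_error_no_polynomial_part_general
    (n₁ n₂ m p : ℕ) (r : ℕ)
    (E₁₁ A₁₁ : Matrix (Fin n₁) (Fin n₁) ℂ)
    (A₂₁ : Matrix (Fin n₂) (Fin n₁) ℂ)
    (B₁ : Matrix (Fin n₁) (Fin m) ℂ)
    (C₁ : Matrix (Fin p) (Fin n₁) ℂ)
    (D : Matrix (Fin p) (Fin m) ℂ)
    (hE : IsUnit E₁₁)
    (hSchur : IsUnit (A₂₁ * E₁₁⁻¹ * A₂₁ᵀ))
    (V W : Matrix (Fin n₁) (Fin r) ℂ)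
    (hEt : IsUnit (Wᵀ * E₁₁ * V)) :
    (∀ᶠ s : ℝ in Filter.atTop,
        IsUnit ((s : ℂ) • fromBlocks E₁₁ 0 0 0 - fromBlocks A₁₁ A₂₁ᵀ A₂₁ 0)
        ∧ IsUnit ((s : ℂ) • (Wᵀ * E₁₁ * V) - Wᵀ * A₁₁ * V))
    ∧ Filter.Tendsto
        (fun s : ℝ =>
          (fromCols C₁ (0 : Matrix (Fin p) (Fin n₂) ℂ)
              * ((s : ℂ) • fromBlocks E₁₁ 0 0 0 - fromBlocks A₁₁ A₂₁ᵀ A₂₁ 0)⁻¹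
              * fromRows B₁ (0 : Matrix (Fin n₂) (Fin m) ℂ) + D)
            - (C₁ * V * ((s : ℂ) • (Wᵀ * E₁₁ * V) - Wᵀ * A₁₁ * V)⁻¹ * (Wᵀ * B₁) + D))
        Filter.atTop (nhds 0) := by
  have hsaddle : IsUnit (fromBlocks E₁₁ A₂₁ᵀ A₂₁ 0) :=
    isUnit_fromBlocks_zero₂₂_of_isUnit hE hSchur
  have hs : Tendsto (fun s : ℝ => (s : ℂ)) atTop (cobounded ℂ) :=
    RCLike.tendsto_ofReal_atTop_cobounded ℂ
  have hs_unit : ∀ᶠ s : ℝ in atTop, IsUnit (s : ℂ) :=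
    (hs.eventually_ne_cobounded 0).mono fun _ h => h.isUnit
  refine ⟨?_, ?_⟩
  · filter_upwards [hs_unit, hs.eventually (eventually_isUnit_smul_sub hsaddle _),
      hs.eventually (eventually_isUnit_smul_sub hEt (Wᵀ * A₁₁ * V))] with s hs0 hfull hred
    exact ⟨(isUnit_saddle_pencil_iff hs0 _ _ _).mpr hfull, hred⟩
  · have hfull := tendsto_mul_mul_of_tendsto_zero
      ((tendsto_inv_smul_sub_cobounded hsaddle (fromBlocks A₁₁ 0 0 0)).comp hs)
      (fromCols C₁ (0 : Matrix (Fin p) (Fin n₂) ℂ)) (fromRows B₁ (0 : Matrix (Fin n₂) (Fin m) ℂ))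
    have hred := tendsto_mul_mul_of_tendsto_zero
      ((tendsto_inv_smul_sub_cobounded hEt (Wᵀ * A₁₁ * V)).comp hs) (C₁ * V) (Wᵀ * B₁)
    have hdiff := hfull.sub hred
    rw [sub_zero] at hdiff
    refine hdiff.congr' ?_
    filter_upwards [hs_unit] with s hs0
    simp only [Function.comp_apply, add_sub_add_right_eq_sub,
      fromCols_mul_saddle_pencil_inv_mul_fromRows hs0]

/-- For an index-2 Stokes-type DAE with reduced bases satisfying `A₂₁ V = 0`,
`A₂₁ W = 0`, and `Wᵀ E₁₁ V` invertible: the full and reduced pencils are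
invertible for all sufficiently large real `s`, and the error transfer
function `G(s) − G̃(s)` tends to zero as `s → +∞` along the real axis, i.e.
the error contains no polynomial part (the reduced model matches the
polynomial part of `G`). -/
theorem index2_error_no_polynomial_part
    (n₁ n₂ m p : ℕ) (r : ℕ)
    (E₁₁ A₁₁ : Matrix (Fin n₁) (Fin n₁) ℂ)
    (A₂₁ : Matrix (Fin n₂) (Fin n₁) ℂ)
    (B₁ : Matrix (Fin n₁) (Fin m) ℂ)
    (C₁ : Matrix (Fin p) (Fin n₁) ℂ)
    (D : Matrix (Fin p) (Fin m) ℂ)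
    (hE : IsUnit E₁₁)
    (hSchur : IsUnit (A₂₁ * E₁₁⁻¹ * A₂₁ᵀ))
    (V W : Matrix (Fin n₁) (Fin r) ℂ)
    (hAV : A₂₁ * V = 0)
    (hAW : A₂₁ * W = 0)
    (hEt : IsUnit (Wᵀ * E₁₁ * V)) :
    (∀ᶠ s : ℝ in Filter.atTop,
        IsUnit ((s : ℂ) • fromBlocks E₁₁ 0 0 0 - fromBlocks A₁₁ A₂₁ᵀ A₂₁ 0)
        ∧ IsUnit ((s : ℂ) • (Wᵀ * E₁₁ * V) - Wᵀ * A₁₁ * V))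
    ∧ Filter.Tendsto
        (fun s : ℝ =>
          (fromCols C₁ (0 : Matrix (Fin p) (Fin n₂) ℂ)
              * ((s : ℂ) • fromBlocks E₁₁ 0 0 0 - fromBlocks A₁₁ A₂₁ᵀ A₂₁ 0)⁻¹
              * fromRows B₁ (0 : Matrix (Fin n₂) (Fin m) ℂ) + D)
            - (C₁ * V * ((s : ℂ) • (Wᵀ * E₁₁ * V) - Wᵀ * A₁₁ * V)⁻¹ * (Wᵀ * B₁) + D))
        Filter.atTop (nhds 0) :=
  index2_error_no_polynomial_part_general n₁ n₂ m p r E₁₁ A₁₁ A₂₁ B₁ C₁ D hE hSchur V W hEt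
end

section
/- Consider the index-2 Stokes-type DAE with E₁₁ ∈ ℂ^{n₁×n₁} invertible, A₁₁ ∈ ℂ^{n₁×n₁}, A₂₁ ∈ ℂ^{n₂×n₁} such that A₂₁ E₁₁^{-1} A₂₁ᵀ is invertible, B₁ ∈ ℂ^{n₁×m}, C₁ ∈ ℂ^{p×n₁}, C₂ ∈ ℂ^{p×n₂}, D ∈ ℂ^{p×m}, and transfer function G(s) = ℭ(s𝔼 − 𝔸)^{-1}𝔹 + D where 𝔼 = diag(E₁₁, 0), 𝔸 = [[A₁₁, A₂₁ᵀ],[A₂₁, 0]], 𝔹 = [B₁; 0], ℭ = [C₁, C₂]. Then s𝔼 − 𝔸 is invertible for all sufficiently large real s, and as s → +∞ along the real axis, G(s) converges to the constant matrix D̃ = D − C₂ (A₂₁ E₁₁^{-1} A₂₁ᵀ)^{-1} A₂₁ E₁₁^{-1} B₁; that is, the polynomial part of G is the constant matrix D̃. -/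
/-!
Scaling block rows and columns, `s𝔼 − 𝔸 = diag(1, s⁻¹) · N(s⁻¹) · diag(s, 1)` for `s ≠ 0`,
where the scaled pencil is `N(t) = [[E₁₁ − t A₁₁, −A₂₁ᵀ], [−A₂₁, 0]]`. The matrix `N(t)` depends
continuously on `t` and is invertible at `t = 0`, its Schur complement there being
`A₂₁ E₁₁⁻¹ A₂₁ᵀ`. Hence `G(s) = F(s⁻¹)` with `F(t) = [t C₁, C₂] N(t)⁻¹ 𝔹 + D` continuous at `0`,
and `F(0) = D̃` is read off from the lower-left block `−(A₂₁ E₁₁⁻¹ A₂₁ᵀ)⁻¹ A₂₁ E₁₁⁻¹` of `N(0)⁻¹`.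
-/

open Matrix Filter Topology

section SchurComplement

variable {K : Type*} [Field K] {n₁ n₂ : Type*} [Fintype n₁] [Fintype n₂]
  [DecidableEq n₁] [DecidableEq n₂]

theorem fromBlocks_zero₂₂_mul_eq_one {Y : Matrix n₁ n₁ K} {Q : Matrix n₁ n₂ K}
    {R : Matrix n₂ n₁ K} (hY : IsUnit Y) (hS : IsUnit (R * Y⁻¹ * Q)) :
    fromBlocks Y Q R 0 *
      fromBlocks (Y⁻¹ - Y⁻¹ * Q * (R * Y⁻¹ * Q)⁻¹ * R * Y⁻¹) (Y⁻¹ * Q * (R * Y⁻¹ * Q)⁻¹)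
        ((R * Y⁻¹ * Q)⁻¹ * R * Y⁻¹) (-(R * Y⁻¹ * Q)⁻¹) = 1 := by
  have hYY : Y * Y⁻¹ = 1 := mul_nonsing_inv Y ((isUnit_iff_isUnit_det Y).mp hY)
  have hSS := mul_nonsing_inv _ ((isUnit_iff_isUnit_det _).mp hS)
  rw [fromBlocks_multiply, ← fromBlocks_one]
  simp only [Matrix.mul_sub, Matrix.mul_neg, Matrix.zero_mul, ← Matrix.mul_assoc, hYY, hSS,
    Matrix.one_mul, add_zero, sub_add_cancel, add_neg_cancel, sub_self, neg_zero]

theorem fromBlocks_smul_one_mul_inv {a b : K} (ha : a ≠ 0) (hb : b ≠ 0) :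
    fromBlocks (a • 1 : Matrix n₁ n₁ K) 0 0 (b • 1 : Matrix n₂ n₂ K) *
      fromBlocks (a⁻¹ • 1) 0 0 (b⁻¹ • 1) = 1 := by
  simp [fromBlocks_multiply, smul_smul, ha, hb]

end SchurComplement

section ScaledPencil

variable {K : Type*} [Field K] {n₁ n₂ m p : Type*} (E A₁₁ : Matrix n₁ n₁ K) (A₂₁ : Matrix n₂ n₁ K)

def scaledPencil (t : K) : Matrix (n₁ ⊕ n₂) (n₁ ⊕ n₂) K :=
  fromBlocks (E - t • A₁₁) (-A₂₁ᵀ) (-A₂₁) 0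

theorem scaledPencil_zero : scaledPencil E A₁₁ A₂₁ 0 = fromBlocks E (-A₂₁ᵀ) (-A₂₁) 0 := by
  simp [scaledPencil]

variable [Fintype n₁] [Fintype n₂] [DecidableEq n₁] [DecidableEq n₂]

theorem pencil_eq_mul_scaledPencil_mul {c : K} (hc : c ≠ 0) :
    c • fromBlocks E 0 0 0 - fromBlocks A₁₁ A₂₁ᵀ A₂₁ 0 =
      fromBlocks ((1 : K) • 1) 0 0 (c⁻¹ • 1) * scaledPencil E A₁₁ A₂₁ c⁻¹ *
        fromBlocks (c • 1) 0 0 ((1 : K) • 1) := by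
  simp only [scaledPencil, fromBlocks_multiply]
  simp [smul_smul, hc, fromBlocks_smul, sub_eq_add_neg, fromBlocks_neg, fromBlocks_add]

theorem isUnit_pencil_of_isUnit_scaledPencil {c : K} (hc : c ≠ 0)
    (h : IsUnit (scaledPencil E A₁₁ A₂₁ c⁻¹)) :
    IsUnit (c • fromBlocks E 0 0 0 - fromBlocks A₁₁ A₂₁ᵀ A₂₁ 0) := by
  rw [pencil_eq_mul_scaledPencil_mul E A₁₁ A₂₁ hc]
  exact ((IsUnit.of_mul_eq_one _ (fromBlocks_smul_one_mul_inv one_ne_zero (inv_ne_zero hc))).mul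
    h).mul (IsUnit.of_mul_eq_one _ (fromBlocks_smul_one_mul_inv hc one_ne_zero))

theorem transfer_eq_scaledPencil [Fintype m] [Fintype p] (B₁ : Matrix n₁ m K)
    (C₁ : Matrix p n₁ K) (C₂ : Matrix p n₂ K) {c : K} (hc : c ≠ 0) :
    fromCols C₁ C₂ * (c • fromBlocks E 0 0 0 - fromBlocks A₁₁ A₂₁ᵀ A₂₁ 0)⁻¹ *
        fromRows B₁ (0 : Matrix n₂ m K) =
      fromCols (c⁻¹ • C₁) C₂ * (scaledPencil E A₁₁ A₂₁ c⁻¹)⁻¹ *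
        fromRows B₁ (0 : Matrix n₂ m K) := by
  rw [pencil_eq_mul_scaledPencil_mul E A₁₁ A₂₁ hc, Matrix.mul_inv_rev, Matrix.mul_inv_rev,
    inv_eq_right_inv (fromBlocks_smul_one_mul_inv hc one_ne_zero),
    inv_eq_right_inv (fromBlocks_smul_one_mul_inv one_ne_zero (inv_ne_zero hc)),
    Matrix.mul_assoc, Matrix.mul_assoc, Matrix.mul_assoc, fromBlocks_mul_fromRows,
    ← Matrix.mul_assoc, fromCols_mul_fromBlocks]
  simp [Matrix.mul_assoc]

theorem isUnit_scaledPencil_zero (hE : IsUnit E) (hS : IsUnit (A₂₁ * E⁻¹ * A₂₁ᵀ)) :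
    IsUnit (scaledPencil E A₁₁ A₂₁ 0) := by
  rw [scaledPencil_zero]
  refine IsUnit.of_mul_eq_one _ (fromBlocks_zero₂₂_mul_eq_one hE ?_)
  simpa using hS

theorem transfer_scaledPencil_zero [Fintype m] [Fintype p] (B₁ : Matrix n₁ m K)
    (C₁ : Matrix p n₁ K) (C₂ : Matrix p n₂ K) (D : Matrix p m K) (hE : IsUnit E)
    (hS : IsUnit (A₂₁ * E⁻¹ * A₂₁ᵀ)) :
    fromCols ((0 : K) • C₁) C₂ * (scaledPencil E A₁₁ A₂₁ 0)⁻¹ *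
        fromRows B₁ (0 : Matrix n₂ m K) + D =
      D - C₂ * (A₂₁ * E⁻¹ * A₂₁ᵀ)⁻¹ * (A₂₁ * E⁻¹ * B₁) := by
  have hS' : IsUnit (-A₂₁ * E⁻¹ * -A₂₁ᵀ) := by simpa using hS
  rw [scaledPencil_zero, inv_eq_right_inv (fromBlocks_zero₂₂_mul_eq_one hE hS'),
    fromCols_mul_fromBlocks, fromCols_mul_fromRows]
  simp [Matrix.mul_assoc, sub_eq_add_neg, add_comm]

end ScaledPencil

section Continuity

variable {K : Type*} [Field K] [TopologicalSpace K] [IsTopologicalDivisionRing K]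
  {n₁ n₂ m p : Type*} (E A₁₁ : Matrix n₁ n₁ K) (A₂₁ : Matrix n₂ n₁ K)

theorem continuous_scaledPencil : Continuous (scaledPencil E A₁₁ A₂₁) := by
  unfold scaledPencil
  fun_prop

variable [Fintype n₁] [Fintype n₂] [DecidableEq n₁] [DecidableEq n₂]

theorem eventually_isUnit_scaledPencil [T1Space K] (h : IsUnit (scaledPencil E A₁₁ A₂₁ 0)) :
    ∀ᶠ t in 𝓝 0, IsUnit (scaledPencil E A₁₁ A₂₁ t) := by
  have hdet := (continuous_scaledPencil E A₁₁ A₂₁).matrix_det.continuousAt (x := 0)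
  filter_upwards [hdet.eventually_ne ((isUnit_iff_isUnit_det _).mp h).ne_zero] with t ht
  exact (isUnit_iff_isUnit_det _).mpr ht.isUnit

theorem continuousAt_inv_scaledPencil (h : IsUnit (scaledPencil E A₁₁ A₂₁ 0)) :
    ContinuousAt (fun t => (scaledPencil E A₁₁ A₂₁ t)⁻¹) 0 := by
  refine ContinuousAt.comp (continuousAt_matrix_inv _ ?_)
    (continuous_scaledPencil E A₁₁ A₂₁).continuousAt
  rw [Ring.inverse_eq_inv']
  exact continuousAt_inv₀ ((isUnit_iff_isUnit_det _).mp h).ne_zero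

theorem continuousAt_transfer_scaledPencil [Fintype m] [Fintype p] (B₁ : Matrix n₁ m K)
    (C₁ : Matrix p n₁ K) (C₂ : Matrix p n₂ K) (D : Matrix p m K)
    (h : IsUnit (scaledPencil E A₁₁ A₂₁ 0)) :
    ContinuousAt (fun t => fromCols (t • C₁) C₂ * (scaledPencil E A₁₁ A₂₁ t)⁻¹ *
      fromRows B₁ (0 : Matrix n₂ m K) + D) 0 := by
  have hcols : Continuous fun t : K => fromCols (t • C₁) C₂ :=
    continuous_matrix fun i j => by cases j <;> simp <;> fun_prop
  have hΦ : Continuous fun q : K × Matrix (n₁ ⊕ n₂) (n₁ ⊕ n₂) K =>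
      fromCols (q.1 • C₁) C₂ * q.2 * fromRows B₁ (0 : Matrix n₂ m K) + D :=
    (((hcols.comp continuous_fst).matrix_mul continuous_snd).matrix_mul continuous_const).add
      continuous_const
  have hg : ContinuousAt (fun t : K => (t, (scaledPencil E A₁₁ A₂₁ t)⁻¹)) 0 :=
    continuousAt_id.prodMk (continuousAt_inv_scaledPencil E A₁₁ A₂₁ h)
  simpa only [Function.comp_def] using hΦ.continuousAt.comp hg

end Continuity

/-- The polynomial part of the transfer function of an index-2 Stokes-type DAE
is the constant matrix `D̃ = D − C₂ (A₂₁ E₁₁⁻¹ A₂₁ᵀ)⁻¹ A₂₁ E₁₁⁻¹ B₁`: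
the pencil `s𝔼 − 𝔸` is invertible for all sufficiently large real `s`, and
`G(s) → D̃` as `s → +∞` along the real axis. -/
theorem index2_polynomial_part
    (n₁ n₂ m p : ℕ)
    (E₁₁ A₁₁ : Matrix (Fin n₁) (Fin n₁) ℂ)
    (A₂₁ : Matrix (Fin n₂) (Fin n₁) ℂ)
    (B₁ : Matrix (Fin n₁) (Fin m) ℂ)
    (C₁ : Matrix (Fin p) (Fin n₁) ℂ)
    (C₂ : Matrix (Fin p) (Fin n₂) ℂ)
    (D : Matrix (Fin p) (Fin m) ℂ)
    (hE : IsUnit E₁₁)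
    (hSchur : IsUnit (A₂₁ * E₁₁⁻¹ * A₂₁ᵀ)) :
    (∀ᶠ s : ℝ in Filter.atTop,
        IsUnit ((s : ℂ) • fromBlocks E₁₁ 0 0 0 - fromBlocks A₁₁ A₂₁ᵀ A₂₁ 0))
    ∧ Filter.Tendsto
        (fun s : ℝ =>
          fromCols C₁ C₂
            * ((s : ℂ) • fromBlocks E₁₁ 0 0 0 - fromBlocks A₁₁ A₂₁ᵀ A₂₁ 0)⁻¹
            * fromRows B₁ (0 : Matrix (Fin n₂) (Fin m) ℂ) + D)
        Filter.atTop
        (nhds (D - C₂ * (A₂₁ * E₁₁⁻¹ * A₂₁ᵀ)⁻¹ * (A₂₁ * E₁₁⁻¹ * B₁))) := by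
  have hN₀ := isUnit_scaledPencil_zero E₁₁ A₁₁ A₂₁ hE hSchur
  have hinv : Tendsto (fun s : ℝ => (s : ℂ)⁻¹) atTop (𝓝 0) := by
    simpa using tendsto_ofReal_iff.mpr tendsto_inv_atTop_zero
  have hne : ∀ᶠ s : ℝ in atTop, (s : ℂ) ≠ 0 := by
    filter_upwards [eventually_ne_atTop 0] with s hs using Complex.ofReal_ne_zero.mpr hs
  refine ⟨?_, ?_⟩
  · filter_upwards [hne, hinv.eventually (eventually_isUnit_scaledPencil E₁₁ A₁₁ A₂₁ hN₀)]
      with s hs hN using isUnit_pencil_of_isUnit_scaledPencil E₁₁ A₁₁ A₂₁ hs hN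
  · have hF := (continuousAt_transfer_scaledPencil E₁₁ A₁₁ A₂₁ B₁ C₁ C₂ D hN₀).tendsto.comp hinv
    rw [transfer_scaledPencil_zero E₁₁ A₁₁ A₂₁ B₁ C₁ C₂ D hE hSchur] at hF
    refine hF.congr' ?_
    filter_upwards [hne] with s hs
    simp only [Function.comp_apply, transfer_eq_scaledPencil E₁₁ A₁₁ A₂₁ B₁ C₁ C₂ hs]
end

section
/- Consider the index-2 Stokes-type DAE data: E₁₁ ∈ ℂ^{n₁×n₁} invertible, A₁₁ ∈ ℂ^{n₁×n₁}, A₂₁ ∈ ℂ^{n₂×n₁}, B₁ ∈ ℂ^{n₁×m}, C₁ ∈ ℂ^{p×n₁}. Let σ₁,…,σ_r ∈ ℂ, b₁,…,b_r ∈ ℂ^m, c₁,…,c_r ∈ ℂ^p, and for each i let (vᵢ, zᵢ) and (wᵢ, qᵢ) solve the saddle-point systems [[σᵢE₁₁ − A₁₁, A₂₁ᵀ],[A₂₁, 0]][vᵢ; zᵢ] = [B₁ bᵢ; 0] and [[σᵢE₁₁ᵀ − A₁₁ᵀ, A₂₁ᵀ],[A₂₁, 0]][wᵢ; qᵢ]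 = [C₁ᵀ cᵢ; 0]. Set V = [v₁,…,v_r], W = [w₁,…,w_r] ∈ ℂ^{n₁×r}, Ẽ = Wᵀ E₁₁ V, Ã = Wᵀ A₁₁ V, and let eᵢ ∈ ℂ^r denote the i-th standard basis vector. Then: (i) A₂₁ V = 0 and A₂₁ W = 0; (ii) for each i, (σᵢ Ẽ − Ã) eᵢ = Wᵀ B₁ bᵢ; and (iii) for each i, eᵢᵀ (σᵢ Ẽ − Ã) = cᵢᵀ C₁ V. -/
open Matrix

/-- Key algebraic identities for the interpolatory bases of index-2
Stokes-type DAEs: with `V = [v₁,…,v_r]`, `W = [w₁,…,w_r]` built from the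
saddle-point solves, (i) `A₂₁ V = 0` and `A₂₁ W = 0`; (ii) `(σᵢẼ − Ã) eᵢ =
Wᵀ B₁ bᵢ`; (iii) `eᵢᵀ (σᵢẼ − Ã) = cᵢᵀ C₁ V`, where `Ẽ = Wᵀ E₁₁ V` and
`Ã = Wᵀ A₁₁ V`. -/
theorem index2_basis_identities
    (n₁ n₂ m p r : ℕ)
    (E₁₁ A₁₁ : Matrix (Fin n₁) (Fin n₁) ℂ)
    (A₂₁ : Matrix (Fin n₂) (Fin n₁) ℂ)
    (B₁ : Matrix (Fin n₁) (Fin m) ℂ)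
    (C₁ : Matrix (Fin p) (Fin n₁) ℂ)
    (hE : IsUnit E₁₁)
    (σ : Fin r → ℂ) (b : Fin r → Fin m → ℂ) (c : Fin r → Fin p → ℂ)
    (v w : Fin r → Fin n₁ → ℂ) (z q : Fin r → Fin n₂ → ℂ)
    (hv : ∀ i, (fromBlocks (σ i • E₁₁ - A₁₁) A₂₁ᵀ A₂₁ 0).mulVec
        (Sum.elim (v i) (z i)) = Sum.elim (B₁.mulVec (b i)) 0)
    (hw : ∀ i, (fromBlocks (σ i • E₁₁ᵀ - A₁₁ᵀ) A₂₁ᵀ A₂₁ 0).mulVec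
        (Sum.elim (w i) (q i)) = Sum.elim (C₁ᵀ.mulVec (c i)) 0)
    (V W : Matrix (Fin n₁) (Fin r) ℂ)
    (hV : V = (Matrix.of v)ᵀ)
    (hW : W = (Matrix.of w)ᵀ) :
    (A₂₁ * V = 0 ∧ A₂₁ * W = 0)
    ∧ (∀ i : Fin r,
        (σ i • (Wᵀ * E₁₁ * V) - Wᵀ * A₁₁ * V).mulVec (Pi.single i 1)
          = (Wᵀ * B₁).mulVec (b i))
    ∧ (∀ i : Fin r,
        Matrix.vecMul (Pi.single i 1) (σ i • (Wᵀ * E₁₁ * V) - Wᵀ * A₁₁ * V)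
          = Matrix.vecMul (c i) (C₁ * V)) := by

  subst hV hW
  -- extract block equations
  have htopv : ∀ i, (σ i • E₁₁ - A₁₁).mulVec (v i) + A₂₁ᵀ.mulVec (z i)
      = B₁.mulVec (b i) := by
    intro i; funext k
    have h := congrFun (hv i) (Sum.inl k)
    simpa [fromBlocks_mulVec] using h
  have hbotv : ∀ i, A₂₁.mulVec (v i) = 0 := by
    intro i; funext k
    have h := congrFun (hv i) (Sum.inr k)
    simpa [fromBlocks_mulVec] using h
  have htopw : ∀ i, (σ i • E₁₁ᵀ - A₁₁ᵀ).mulVec (w i) + A₂₁ᵀ.mulVec (q i)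
      = C₁ᵀ.mulVec (c i) := by
    intro i; funext k
    have h := congrFun (hw i) (Sum.inl k)
    simpa [fromBlocks_mulVec] using h
  have hbotw : ∀ i, A₂₁.mulVec (w i) = 0 := by
    intro i; funext k
    have h := congrFun (hw i) (Sum.inr k)
    simpa [fromBlocks_mulVec] using h
  have hAV : A₂₁ * (Matrix.of v)ᵀ = 0 := by
    funext k i
    have h := congrFun (hbotv i) k
    simpa [Matrix.mul_apply, Matrix.mulVec, dotProduct] using h
  have hAW : A₂₁ * (Matrix.of w)ᵀ = 0 := by
    funext k i
    have h := congrFun (hbotw i) k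
    simpa [Matrix.mul_apply, Matrix.mulVec, dotProduct] using h
  -- column extraction
  have hVcol : ∀ i : Fin r, (Matrix.of v)ᵀ.mulVec (Pi.single i 1) = v i := by
    intro i; funext j
    simp [Matrix.mulVec, dotProduct, Pi.single_apply, mul_ite]
  have hWrow : ∀ i : Fin r,
      Matrix.vecMul (Pi.single i 1) ((Matrix.of w)ᵀ)ᵀ = w i := by
    intro i; funext j
    simp [Matrix.vecMul, dotProduct, Pi.single_apply, ite_mul]
  have hcombine : ∀ i : Fin r,
      σ i • (((Matrix.of w)ᵀ)ᵀ * E₁₁ * (Matrix.of v)ᵀ)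
        - ((Matrix.of w)ᵀ)ᵀ * A₁₁ * (Matrix.of v)ᵀ
      = ((Matrix.of w)ᵀ)ᵀ * (σ i • E₁₁ - A₁₁) * (Matrix.of v)ᵀ := by
    intro i
    rw [Matrix.mul_sub, Matrix.sub_mul, Matrix.mul_smul, Matrix.smul_mul]
  refine ⟨⟨hAV, hAW⟩, ?_, ?_⟩
  · intro i
    have hzero : Matrix.of w * A₂₁ᵀ = 0 := by
      have := congrArg Matrix.transpose hAW
      simpa [Matrix.transpose_mul] using this
    have step : (σ i • E₁₁ - A₁₁).mulVec (v i)
        = B₁.mulVec (b i) - A₂₁ᵀ.mulVec (z i) := by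
      rw [eq_sub_iff_add_eq]; exact htopv i
    rw [hcombine i, ← Matrix.mulVec_mulVec, ← Matrix.mulVec_mulVec, hVcol i, step,
      Matrix.mulVec_sub]
    simp [Matrix.mulVec_mulVec, hzero]
  · intro i
    have step : Matrix.vecMul (w i) (σ i • E₁₁ - A₁₁)
        = Matrix.vecMul (c i) C₁ - Matrix.vecMul (q i) A₂₁ := by
      have e1 : (σ i • E₁₁ᵀ - A₁₁ᵀ)ᵀ = σ i • E₁₁ - A₁₁ := by
        simp [Matrix.transpose_sub, Matrix.transpose_smul]
      rw [← e1, Matrix.vecMul_transpose, eq_sub_of_add_eq (htopw i),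
        Matrix.mulVec_transpose, Matrix.mulVec_transpose]
    rw [hcombine i, ← Matrix.vecMul_vecMul, ← Matrix.vecMul_vecMul, hWrow i, step,
      Matrix.sub_vecMul, Matrix.vecMul_vecMul, Matrix.vecMul_vecMul, hAV]
    simp
end
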